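/- arXiv:2508.13222 — 16 statements merged into one kernel-verified Lean document; each statement's English description precedes it below -/
import Mathlib

section
/- Let R₁,…,Rₙ be commutative rings with identity, R = R₁ × ⋯ × Rₙ, and I = I₁ × ⋯ × Iₙ where each Iⱼ is an ideal of Rⱼ. If for some index i the elements xᵢ and yᵢ are adjacent vertices of Γ''_{Iᵢ}(Rᵢ), then every element x of R whose i-th component is xᵢ and every element y of R whose i-th component is yᵢ are adjacent vertices of Γ''_I(R). -/
/-- `x` is a vertex of the ideal-based cozero-divisor graph `Γ''_I(R)`:
`x ∈ R \ I` and `xR + I ≠ R`. -/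
def CozVertex {R : Type*} [CommRing R] (I : Ideal R) (x : R) : Prop :=
  x ∉ I ∧ Ideal.span {x} ⊔ I ≠ ⊤

/-- Adjacency in `Γ''_I(R)`: `x` and `y` are distinct, `x ∉ yR + I` and `y ∉ xR + I`. -/
def CozAdj {R : Type*} [CommRing R] (I : Ideal R) (x y : R) : Prop :=
  x ≠ y ∧ x ∉ Ideal.span {y} ⊔ I ∧ y ∉ Ideal.span {x} ⊔ I

lemma coz_aux {n : ℕ} {R : Fin n → Type*} [∀ i, CommRing (R i)]
    (Is : ∀ i, Ideal (R i)) (I : Ideal (∀ i, R i))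
    (hI : ∀ z : ∀ i, R i, z ∈ I ↔ ∀ i, z i ∈ Is i)
    (i : Fin n) (x z : ∀ j, R j) (hz : z ∈ Ideal.span {x} ⊔ I) :
    z i ∈ Ideal.span {x i} ⊔ Is i := by
  rw [Submodule.mem_sup] at hz ⊢
  obtain ⟨a, ha, b, hb, hab⟩ := hz
  obtain ⟨r, rfl⟩ := Ideal.mem_span_singleton'.mp ha
  exact ⟨r i * x i, Ideal.mem_span_singleton'.mpr ⟨r i, rfl⟩, b i, (hI b).mp hb i,
    by rw [← hab]; rfl⟩

/-- If `xᵢ` and `yᵢ` are adjacent vertices of `Γ''_{Iᵢ}(Rᵢ)`, then any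
`x, y` in the product ring `R = R₁ × ⋯ × Rₙ` with `i`-th components `xᵢ`, `yᵢ` are adjacent
vertices of `Γ''_I(R)`, where `I = I₁ × ⋯ × Iₙ`. -/
theorem stmt_0 {n : ℕ} {R : Fin n → Type*} [∀ i, CommRing (R i)]
    (Is : ∀ i, Ideal (R i)) (I : Ideal (∀ i, R i))
    (hI : ∀ z : ∀ i, R i, z ∈ I ↔ ∀ i, z i ∈ Is i)
    (i : Fin n) (xi yi : R i)
    (hxv : CozVertex (Is i) xi) (hyv : CozVertex (Is i) yi)
    (hadj : CozAdj (Is i) xi yi)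
    (x y : ∀ j, R j) (hx : x i = xi) (hy : y i = yi) :
    CozVertex I x ∧ CozVertex I y ∧ CozAdj I x y := by
  subst hx hy
  obtain ⟨hne, hxy, hyx⟩ := hadj
  refine ⟨⟨fun h => hxv.1 ((hI x).mp h i), fun h => hxv.2 ?_⟩,
    ⟨fun h => hyv.1 ((hI y).mp h i), fun h => hyv.2 ?_⟩,
    fun h => hne (congrFun h i),
    fun h => hxy (coz_aux Is I hI i y x h),
    fun h => hyx (coz_aux Is I hI i x y h)⟩
  · rw [Ideal.eq_top_iff_one]
    have := coz_aux Is I hI i x 1 (h ▸ Submodule.mem_top)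
    simpa using this
  · rw [Ideal.eq_top_iff_one]
    have := coz_aux Is I hI i y 1 (h ▸ Submodule.mem_top)
    simpa using this
end

section
/- Let R₁, R₂ be commutative rings with identity and I₁, I₂ ideals of R₁, R₂ respectively. If (x₁, y₁) and (x₂, y₂) are pairs with x₁, x₂ vertices of Γ''_{I₁}(R₁) and y₁, y₂ vertices of Γ''_{I₂}(R₂), and the vertices (x₁, y₁) and (x₂, y₂) of Γ''_{I₁×I₂}(R₁ × R₂) are not adjacent, then x₁ is not adjacent to x₂ in Γ''_{I₁}(R₁) and y₁ is not adjacent to y₂ in Γ''_{I₂}(R₂). -/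
lemma aux_mem {R₁ R₂ : Type*} [CommRing R₁] [CommRing R₂]
    {I₁ : Ideal R₁} {I₂ : Ideal R₂} {a c : R₁} {b d : R₂}
    (h : (a, b) ∈ Ideal.span {(c, d)} ⊔ (I₁.prod I₂)) :
    a ∈ Ideal.span {c} ⊔ I₁ ∧ b ∈ Ideal.span {d} ⊔ I₂ := by
  rw [Submodule.mem_sup] at h
  obtain ⟨u, hu, v, hv, huv⟩ := h
  rw [Ideal.mem_span_singleton] at hu
  obtain ⟨r, hr⟩ := hu
  rw [Ideal.mem_prod] at hv
  constructor
  · rw [Submodule.mem_sup]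
    refine ⟨c * r.1, ?_, v.1, hv.1, ?_⟩
    · exact Ideal.mem_span_singleton.mpr ⟨r.1, rfl⟩
    · have := congrArg Prod.fst huv
      simpa [hr] using this
  · rw [Submodule.mem_sup]
    refine ⟨d * r.2, ?_, v.2, hv.2, ?_⟩
    · exact Ideal.mem_span_singleton.mpr ⟨r.2, rfl⟩
    · have := congrArg Prod.snd huv
      simpa [hr] using this

/-- If `x₁, x₂` are vertices of `Γ''_{I₁}(R₁)`, `y₁, y₂` are vertices of
`Γ''_{I₂}(R₂)`, and `(x₁, y₁)`, `(x₂, y₂)` are not adjacent in `Γ''_{I₁×I₂}(R₁ × R₂)`, then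
`x₁` is not adjacent to `x₂` in `Γ''_{I₁}(R₁)` and `y₁` is not adjacent to `y₂` in
`Γ''_{I₂}(R₂)`. -/
theorem stmt_1 {R₁ R₂ : Type*} [CommRing R₁] [CommRing R₂]
    (I₁ : Ideal R₁) (I₂ : Ideal R₂) (x₁ x₂ : R₁) (y₁ y₂ : R₂)
    (hx₁ : CozVertex I₁ x₁) (hx₂ : CozVertex I₁ x₂)
    (hy₁ : CozVertex I₂ y₁) (hy₂ : CozVertex I₂ y₂)
    (h : ¬ CozAdj (I₁.prod I₂) (x₁, y₁) (x₂, y₂)) :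
    ¬ CozAdj I₁ x₁ x₂ ∧ ¬ CozAdj I₂ y₁ y₂ := by
  constructor
  · rintro ⟨hne, h12, h21⟩
    exact h ⟨by simp [hne], fun hm => h12 (aux_mem hm).1, fun hm => h21 (aux_mem hm).1⟩
  · rintro ⟨hne, h12, h21⟩
    exact h ⟨by simp [hne], fun hm => h12 (aux_mem hm).2, fun hm => h21 (aux_mem hm).2⟩
end

section
/- Let R₁, R₂ be commutative rings with identity and I₁, I₂ ideals of R₁, R₂ respectively. For x ∈ R₁ and y₁, y₂ ∈ R₂, the elements (x, y₁) and (x, y₂) are adjacent vertices of Γ''_{I₁×I₂}(R₁ × R₂) if and only if y₁ and y₂ are adjacent vertices of Γ''_{I₂}(R₂). -/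
lemma prod_span_sup_mem_iff {R₁ R₂ : Type*} [CommRing R₁] [CommRing R₂]
    (I₁ : Ideal R₁) (I₂ : Ideal R₂) (a u : R₁) (b v : R₂) :
    (u, v) ∈ Ideal.span {(a, b)} ⊔ I₁.prod I₂ ↔
      (u ∈ Ideal.span {a} ⊔ I₁ ∧ v ∈ Ideal.span {b} ⊔ I₂) := by
  constructor
  · intro h
    rcases Submodule.mem_sup.mp h with ⟨z, hz, w, hw, hzw⟩
    rcases Ideal.mem_span_singleton'.mp hz with ⟨c, hc⟩
    rw [Ideal.mem_prod] at hw
    constructor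
    · refine Submodule.mem_sup.mpr ⟨c.1 * a, Ideal.mem_span_singleton'.mpr ⟨c.1, rfl⟩,
        w.1, hw.1, ?_⟩
      have h1 := congrArg Prod.fst hzw
      have h2 := congrArg Prod.fst hc
      simp at h1 h2
      rw [← h2] at h1; exact h1
    · refine Submodule.mem_sup.mpr ⟨c.2 * b, Ideal.mem_span_singleton'.mpr ⟨c.2, rfl⟩,
        w.2, hw.2, ?_⟩
      have h1 := congrArg Prod.snd hzw
      have h2 := congrArg Prod.snd hc
      simp at h1 h2
      rw [← h2] at h1; exact h1
  · rintro ⟨h1, h2⟩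
    rcases Submodule.mem_sup.mp h1 with ⟨z1, hz1, w1, hw1, e1⟩
    rcases Submodule.mem_sup.mp h2 with ⟨z2, hz2, w2, hw2, e2⟩
    rcases Ideal.mem_span_singleton'.mp hz1 with ⟨c1, rfl⟩
    rcases Ideal.mem_span_singleton'.mp hz2 with ⟨c2, rfl⟩
    refine Submodule.mem_sup.mpr ⟨(c1, c2) * (a, b),
      Ideal.mem_span_singleton'.mpr ⟨(c1, c2), rfl⟩, (w1, w2),
      (Ideal.mem_prod _ _).mpr ⟨hw1, hw2⟩, ?_⟩
    simp [Prod.ext_iff, e1, e2]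

/-- For `x ∈ R₁` and `y₁, y₂ ∈ R₂`, the elements `(x, y₁)` and `(x, y₂)` are
adjacent vertices of `Γ''_{I₁×I₂}(R₁ × R₂)` iff `y₁` and `y₂` are adjacent vertices of
`Γ''_{I₂}(R₂)`. -/
theorem stmt_2 {R₁ R₂ : Type*} [CommRing R₁] [CommRing R₂]
    (I₁ : Ideal R₁) (I₂ : Ideal R₂) (x : R₁) (y₁ y₂ : R₂) :
    (CozVertex (I₁.prod I₂) (x, y₁) ∧ CozVertex (I₁.prod I₂) (x, y₂) ∧
      CozAdj (I₁.prod I₂) (x, y₁) (x, y₂)) ↔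
    (CozVertex I₂ y₁ ∧ CozVertex I₂ y₂ ∧ CozAdj I₂ y₁ y₂) := by
  have hx : x ∈ Ideal.span {x} ⊔ I₁ :=
    Submodule.mem_sup_left (Ideal.mem_span_singleton_self x)
  constructor
  · rintro ⟨-, -, hne, h12, h21⟩
    have hne' : y₁ ≠ y₂ := fun h => hne (by rw [h])
    have hm12 : y₁ ∉ Ideal.span {y₂} ⊔ I₂ := fun h =>
      h12 ((prod_span_sup_mem_iff I₁ I₂ x x y₂ y₁).mpr ⟨hx, h⟩)
    have hm21 : y₂ ∉ Ideal.span {y₁} ⊔ I₂ := fun h =>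
      h21 ((prod_span_sup_mem_iff I₁ I₂ x x y₁ y₂).mpr ⟨hx, h⟩)
    have hi1 : y₁ ∉ I₂ := fun h => hm12 (Submodule.mem_sup_right h)
    have hi2 : y₂ ∉ I₂ := fun h => hm21 (Submodule.mem_sup_right h)
    have ht1 : Ideal.span {y₁} ⊔ I₂ ≠ ⊤ := fun h => by
      rw [h] at hm21; exact hm21 trivial
    have ht2 : Ideal.span {y₂} ⊔ I₂ ≠ ⊤ := fun h => by
      rw [h] at hm12; exact hm12 trivial
    exact ⟨⟨hi1, ht1⟩, ⟨hi2, ht2⟩, hne', hm12, hm21⟩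
  · rintro ⟨⟨hi1, ht1⟩, ⟨hi2, ht2⟩, hne, h12, h21⟩
    have top : ∀ y : R₂, Ideal.span {y} ⊔ I₂ ≠ ⊤ →
        Ideal.span {((x, y) : R₁ × R₂)} ⊔ I₁.prod I₂ ≠ ⊤ := by
      intro y hy h
      apply hy
      rw [Ideal.eq_top_iff_one] at h ⊢
      exact ((prod_span_sup_mem_iff I₁ I₂ x 1 y 1).mp h).2
    refine ⟨⟨fun h => hi1 ((Ideal.mem_prod _ _).mp h).2, top y₁ ht1⟩,
      ⟨fun h => hi2 ((Ideal.mem_prod _ _).mp h).2, top y₂ ht2⟩,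
      fun h => hne (congrArg Prod.snd h),
      fun h => h12 ((prod_span_sup_mem_iff I₁ I₂ x x y₂ y₁).mp h).2,
      fun h => h21 ((prod_span_sup_mem_iff I₁ I₂ x x y₁ y₂).mp h).2⟩
end

section
/- Let R₁, R₂ be commutative rings with identity and I₁, I₂ ideals of R₁, R₂ respectively. For x₁, x₂ ∈ R₁ and y ∈ R₂, the elements (x₁, y) and (x₂, y) are adjacent vertices of Γ''_{I₁×I₂}(R₁ × R₂) if and only if x₁ and x₂ are adjacent vertices of Γ''_{I₁}(R₁). -/
lemma mem_sup_span_prod {R₁ R₂ : Type*} [CommRing R₁] [CommRing R₂]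
    (I₁ : Ideal R₁) (I₂ : Ideal R₂) (a c : R₁) (b d : R₂) :
    ((a, b) : R₁ × R₂) ∈ Ideal.span {((c, d) : R₁ × R₂)} ⊔ (I₁.prod I₂) ↔
      a ∈ Ideal.span {c} ⊔ I₁ ∧ b ∈ Ideal.span {d} ⊔ I₂ := by
  simp only [Submodule.mem_sup, Ideal.mem_span_singleton, Ideal.mem_prod]
  constructor
  · rintro ⟨u, ⟨r, rfl⟩, z, ⟨hz1, hz2⟩, h⟩
    exact ⟨⟨c * r.1, ⟨r.1, rfl⟩, z.1, hz1, congrArg Prod.fst h⟩,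
      ⟨d * r.2, ⟨r.2, rfl⟩, z.2, hz2, congrArg Prod.snd h⟩⟩
  · rintro ⟨⟨u1, ⟨r1, rfl⟩, z1, hz1, h1⟩, ⟨u2, ⟨r2, rfl⟩, z2, hz2, h2⟩⟩
    exact ⟨(c * r1, d * r2), ⟨(r1, r2), rfl⟩, (z1, z2), ⟨hz1, hz2⟩, Prod.ext h1 h2⟩

lemma sup_span_prod_eq_top_iff {R₁ R₂ : Type*} [CommRing R₁] [CommRing R₂]
    (I₁ : Ideal R₁) (I₂ : Ideal R₂) (a : R₁) (b : R₂) :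
    Ideal.span {((a, b) : R₁ × R₂)} ⊔ (I₁.prod I₂) = ⊤ ↔
      (Ideal.span {a} ⊔ I₁ = ⊤ ∧ Ideal.span {b} ⊔ I₂ = ⊤) := by
  simpa only [Ideal.eq_top_iff_one, Prod.mk_one_one] using mem_sup_span_prod I₁ I₂ 1 a 1 b

/-- For `x₁, x₂ ∈ R₁` and `y ∈ R₂`, the elements `(x₁, y)` and `(x₂, y)` are
adjacent vertices of `Γ''_{I₁×I₂}(R₁ × R₂)` iff `x₁` and `x₂` are adjacent vertices of
`Γ''_{I₁}(R₁)`. -/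
theorem stmt_3 {R₁ R₂ : Type*} [CommRing R₁] [CommRing R₂]
    (I₁ : Ideal R₁) (I₂ : Ideal R₂) (x₁ x₂ : R₁) (y : R₂) :
    (CozVertex (I₁.prod I₂) (x₁, y) ∧ CozVertex (I₁.prod I₂) (x₂, y) ∧
      CozAdj (I₁.prod I₂) (x₁, y) (x₂, y)) ↔
    (CozVertex I₁ x₁ ∧ CozVertex I₁ x₂ ∧ CozAdj I₁ x₁ x₂) := by
  have hy : y ∈ Ideal.span {y} ⊔ I₂ :=
    Submodule.mem_sup_left (Ideal.mem_span_singleton_self y)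
  constructor
  · rintro ⟨-, -, hne, hn12, hn21⟩
    rw [mem_sup_span_prod] at hn12 hn21
    have h12 : x₁ ∉ Ideal.span {x₂} ⊔ I₁ := fun h => hn12 ⟨h, hy⟩
    have h21 : x₂ ∉ Ideal.span {x₁} ⊔ I₁ := fun h => hn21 ⟨h, hy⟩
    have hx1 : x₁ ∉ I₁ := fun h => h12 (Submodule.mem_sup_right h)
    have hx2 : x₂ ∉ I₁ := fun h => h21 (Submodule.mem_sup_right h)
    have ht1 : Ideal.span {x₁} ⊔ I₁ ≠ ⊤ := fun h => h21 (h ▸ Submodule.mem_top)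
    have ht2 : Ideal.span {x₂} ⊔ I₁ ≠ ⊤ := fun h => h12 (h ▸ Submodule.mem_top)
    exact ⟨⟨hx1, ht1⟩, ⟨hx2, ht2⟩, fun h => hne (by rw [h]), h12, h21⟩
  · rintro ⟨⟨hx1, ht1⟩, ⟨hx2, ht2⟩, hne, h12, h21⟩
    refine ⟨⟨?_, ?_⟩, ⟨?_, ?_⟩, ?_, ?_, ?_⟩
    · exact fun h => hx1 ((Ideal.mem_prod I₁ I₂).mp h).1
    · exact fun h => ht1 ((sup_span_prod_eq_top_iff I₁ I₂ x₁ y).mp h).1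
    · exact fun h => hx2 ((Ideal.mem_prod I₁ I₂).mp h).1
    · exact fun h => ht2 ((sup_span_prod_eq_top_iff I₁ I₂ x₂ y).mp h).1
    · exact fun h => hne (congrArg Prod.fst h)
    · rw [mem_sup_span_prod]; exact fun h => h12 h.1
    · rw [mem_sup_span_prod]; exact fun h => h21 h.1
end

section
/- Let R₁, R₂ be commutative rings with identity and I₁, I₂ ideals of R₁, R₂ respectively. Then the clique number of Γ''_{I₁×I₂}(R₁ × R₂) is at least the maximum of the clique number of Γ''_{I₁}(R₁) and the clique number of Γ''_{I₂}(R₂). -/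
/-- The ideal-based cozero-divisor graph `Γ''_I(R)` as a simple graph on its vertex set. -/
def cozGraph (R : Type*) [CommRing R] (I : Ideal R) :
    SimpleGraph {x : R // CozVertex I x} where
  Adj a b := CozAdj I a.1 b.1
  symm := ⟨fun a b h => ⟨h.1.symm, h.2.2, h.2.1⟩⟩
  loopless := ⟨fun a h => h.1 rfl⟩

/-- The clique number of a simple graph: the supremum (in `ℕ∞`) of the cardinalities of its
cliques (complete subgraphs). -/
noncomputable def cliqueNumber {V : Type*} (G : SimpleGraph V) : ℕ∞ :=
  sSup {n : ℕ∞ | ∃ s : Finset V, G.IsClique ↑s ∧ (s.card : ℕ∞) = n}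

section Aux

variable {R₁ R₂ : Type*} [CommRing R₁] [CommRing R₂] (I₁ : Ideal R₁) (I₂ : Ideal R₂)

lemma fst_mem_of_mem_sup {a : R₁ × R₂} {y : R₁}
    (h : a ∈ Ideal.span {((y, 0) : R₁ × R₂)} ⊔ I₁.prod I₂) :
    a.1 ∈ Ideal.span {y} ⊔ I₁ := by
  rw [Submodule.mem_sup] at h ⊢
  obtain ⟨u, hu, v, hv, huv⟩ := h
  rw [Ideal.mem_span_singleton] at hu
  obtain ⟨c, hc⟩ := hu
  exact ⟨u.1, Ideal.mem_span_singleton.mpr ⟨c.1, by rw [hc, Prod.fst_mul]⟩, v.1,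
    ((Ideal.mem_prod I₁ I₂).mp (show (v.1, v.2) ∈ I₁.prod I₂ from hv)).1, congrArg Prod.fst huv⟩

lemma snd_mem_of_mem_sup {a : R₁ × R₂} {y : R₂}
    (h : a ∈ Ideal.span {((0, y) : R₁ × R₂)} ⊔ I₁.prod I₂) :
    a.2 ∈ Ideal.span {y} ⊔ I₂ := by
  rw [Submodule.mem_sup] at h ⊢
  obtain ⟨u, hu, v, hv, huv⟩ := h
  rw [Ideal.mem_span_singleton] at hu
  obtain ⟨c, hc⟩ := hu
  exact ⟨u.2, Ideal.mem_span_singleton.mpr ⟨c.2, by rw [hc, Prod.snd_mul]⟩, v.2,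
    ((Ideal.mem_prod I₁ I₂).mp (show (v.1, v.2) ∈ I₁.prod I₂ from hv)).2, congrArg Prod.snd huv⟩

lemma cozVertex_inl {x : R₁} (hx : CozVertex I₁ x) :
    CozVertex (I₁.prod I₂) ((x, 0) : R₁ × R₂) := by
  refine ⟨fun h => hx.1 ((Ideal.mem_prod I₁ I₂).mp (show ((x,(0:R₂))) ∈ I₁.prod I₂ from h)).1, fun h => hx.2 ?_⟩
  rw [Ideal.eq_top_iff_one] at h ⊢
  exact fst_mem_of_mem_sup I₁ I₂ (a := (1 : R₁ × R₂)) h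

lemma cozVertex_inr {x : R₂} (hx : CozVertex I₂ x) :
    CozVertex (I₁.prod I₂) ((0, x) : R₁ × R₂) := by
  refine ⟨fun h => hx.1 ((Ideal.mem_prod I₁ I₂).mp (show (((0:R₁),x)) ∈ I₁.prod I₂ from h)).2, fun h => hx.2 ?_⟩
  rw [Ideal.eq_top_iff_one] at h ⊢
  exact snd_mem_of_mem_sup I₁ I₂ (a := (1 : R₁ × R₂)) h

noncomputable def embL : {x : R₁ // CozVertex I₁ x} ↪ {x : R₁ × R₂ // CozVertex (I₁.prod I₂) x} :=
  ⟨fun a => ⟨(a.1, 0), cozVertex_inl I₁ I₂ a.2⟩,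
   fun a b h => Subtype.ext (congrArg (fun z => z.1.1) h)⟩

noncomputable def embR : {x : R₂ // CozVertex I₂ x} ↪ {x : R₁ × R₂ // CozVertex (I₁.prod I₂) x} :=
  ⟨fun a => ⟨(0, a.1), cozVertex_inr I₁ I₂ a.2⟩,
   fun a b h => Subtype.ext (congrArg (fun z => z.1.2) h)⟩

lemma adj_embL {a b : {x : R₁ // CozVertex I₁ x}} (h : (cozGraph R₁ I₁).Adj a b) :
    (cozGraph (R₁ × R₂) (I₁.prod I₂)).Adj (embL I₁ I₂ a) (embL I₁ I₂ b) := by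
  obtain ⟨hne, h1, h2⟩ := h
  exact ⟨fun hh => hne (congrArg Prod.fst hh),
    fun hh => h1 (fst_mem_of_mem_sup I₁ I₂ hh),
    fun hh => h2 (fst_mem_of_mem_sup I₁ I₂ hh)⟩

lemma adj_embR {a b : {x : R₂ // CozVertex I₂ x}} (h : (cozGraph R₂ I₂).Adj a b) :
    (cozGraph (R₁ × R₂) (I₁.prod I₂)).Adj (embR I₁ I₂ a) (embR I₁ I₂ b) := by
  obtain ⟨hne, h1, h2⟩ := h
  exact ⟨fun hh => hne (congrArg Prod.snd hh),
    fun hh => h1 (snd_mem_of_mem_sup I₁ I₂ hh),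
    fun hh => h2 (snd_mem_of_mem_sup I₁ I₂ hh)⟩

end Aux

/-- The clique number of `Γ''_{I₁×I₂}(R₁ × R₂)` is at least the maximum of
the clique numbers of `Γ''_{I₁}(R₁)` and `Γ''_{I₂}(R₂)`. -/
theorem stmt_4 {R₁ R₂ : Type*} [CommRing R₁] [CommRing R₂]
    (I₁ : Ideal R₁) (I₂ : Ideal R₂) :
    max (cliqueNumber (cozGraph R₁ I₁)) (cliqueNumber (cozGraph R₂ I₂)) ≤
      cliqueNumber (cozGraph (R₁ × R₂) (I₁.prod I₂)) := by
  apply max_le <;>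
  · apply sSup_le
    rintro n ⟨s, hs, rfl⟩
    apply le_sSup
    first
    | refine ⟨s.map (embL I₁ I₂), ?_, by rw [Finset.card_map]⟩
    | refine ⟨s.map (embR I₁ I₂), ?_, by rw [Finset.card_map]⟩
    rintro a ha b hb hab
    simp only [Finset.coe_map, Set.mem_image, Finset.mem_coe] at ha hb
    obtain ⟨x, hx, rfl⟩ := ha
    obtain ⟨y, hy, rfl⟩ := hb
    have hxy : x ≠ y := fun h => hab (by rw [h])
    first
    | exact adj_embL I₁ I₂ (hs hx hy hxy)
    | exact adj_embR I₁ I₂ (hs hx hy hxy)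
end

section
/- Let R₁, R₂ be commutative rings with identity and let I₁ ⊊ R₁, I₂ ⊊ R₂ be proper ideals. For every a ∈ I₁, b ∈ I₂, every unit u₁ of R₁ and every unit u₂ of R₂, the elements (a + u₁, b) and (a, b + u₂) are adjacent vertices of Γ''_{I₁×I₂}(R₁ × R₂). -/
theorem memp {R₁ R₂ : Type*} [CommRing R₁] [CommRing R₂] {I₁ : Ideal R₁} {I₂ : Ideal R₂}
    {x : R₁ × R₂} : x ∈ I₁.prod I₂ ↔ x.1 ∈ I₁ ∧ x.2 ∈ I₂ := Ideal.mem_prod _ _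

/-- For proper ideals `I₁ ⊊ R₁`, `I₂ ⊊ R₂`, `a ∈ I₁`, `b ∈ I₂` and units
`u₁` of `R₁`, `u₂` of `R₂`, the elements `(a + u₁, b)` and `(a, b + u₂)` are adjacent vertices
of `Γ''_{I₁×I₂}(R₁ × R₂)`. -/
theorem stmt_7 {R₁ R₂ : Type*} [CommRing R₁] [CommRing R₂]
    (I₁ : Ideal R₁) (I₂ : Ideal R₂) (hI₁ : I₁ ≠ ⊤) (hI₂ : I₂ ≠ ⊤)
    (a : R₁) (b : R₂) (u₁ : R₁) (u₂ : R₂)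
    (ha : a ∈ I₁) (hb : b ∈ I₂) (hu₁ : IsUnit u₁) (hu₂ : IsUnit u₂) :
    CozVertex (I₁.prod I₂) (a + u₁, b) ∧ CozVertex (I₁.prod I₂) (a, b + u₂) ∧
      CozAdj (I₁.prod I₂) (a + u₁, b) (a, b + u₂) := by
  have hu1ne : a + u₁ ∉ I₁ := fun h => hI₁ (Ideal.eq_top_of_isUnit_mem _ (by simpa using (I₁.sub_mem h ha)) hu₁)
  have hu2ne : b + u₂ ∉ I₂ := fun h => hI₂ (Ideal.eq_top_of_isUnit_mem _ (by simpa using (I₂.sub_mem h hb)) hu₂)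
  refine ⟨⟨fun h => hu1ne (memp.mp h).1, fun h => ?_⟩,
    ⟨fun h => hu2ne (memp.mp h).2, fun h => ?_⟩, ?_, ?_, ?_⟩
  · have : ((0,1) : R₁ × R₂) ∈ Ideal.span {((a + u₁, b) : R₁ × R₂)} ⊔ I₁.prod I₂ := h ▸ trivial
    obtain ⟨r, i, hi, heq⟩ := Ideal.mem_span_singleton_sup.mp this
    have h2 : r.2 * b + i.2 = 1 := congrArg Prod.snd heq
    exact hI₂ (Ideal.eq_top_iff_one _ |>.mpr (h2 ▸ I₂.add_mem (I₂.mul_mem_left _ hb) (memp.mp hi).2))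
  · have : ((1,0) : R₁ × R₂) ∈ Ideal.span {((a, b + u₂) : R₁ × R₂)} ⊔ I₁.prod I₂ := h ▸ trivial
    obtain ⟨r, i, hi, heq⟩ := Ideal.mem_span_singleton_sup.mp this
    have h2 : r.1 * a + i.1 = 1 := congrArg Prod.fst heq
    exact hI₁ (Ideal.eq_top_iff_one _ |>.mpr (h2 ▸ I₁.add_mem (I₁.mul_mem_left _ ha) (memp.mp hi).1))
  · intro h
    have : a + u₁ = a := congrArg Prod.fst h
    have hu0 : u₁ = 0 := by linear_combination this
    exact hI₁ (Ideal.eq_top_of_isUnit_mem _ (hu0 ▸ I₁.zero_mem) hu₁)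
  · intro h
    obtain ⟨r, i, hi, heq⟩ := Ideal.mem_span_singleton_sup.mp h
    have h1 : r.1 * a + i.1 = a + u₁ := congrArg Prod.fst heq
    have : u₁ ∈ I₁ := by
      have : u₁ = r.1 * a + i.1 - a := by linear_combination -h1
      rw [this]
      exact I₁.sub_mem (I₁.add_mem (I₁.mul_mem_left _ ha) (memp.mp hi).1) ha
    exact hI₁ (Ideal.eq_top_of_isUnit_mem _ this hu₁)
  · intro h
    obtain ⟨r, i, hi, heq⟩ := Ideal.mem_span_singleton_sup.mp h
    have h2 : r.2 * b + i.2 = b + u₂ := congrArg Prod.snd heq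
    have : u₂ ∈ I₂ := by
      have : u₂ = r.2 * b + i.2 - b := by linear_combination -h2
      rw [this]
      exact I₂.sub_mem (I₂.add_mem (I₂.mul_mem_left _ hb) (memp.mp hi).2) hb
    exact hI₂ (Ideal.eq_top_of_isUnit_mem _ this hu₂)
end

section
/- Let R₁, R₂ be commutative rings with identity and let I₁ ⊊ R₁, I₂ ⊊ R₂ be proper ideals. If at least one of the graphs Γ''_{I₁}(R₁) or Γ''_{I₂}(R₂) is not totally disconnected (i.e., has at least one edge), then the girth of Γ''_{I₁×I₂}(R₁ × R₂) equals 3. -/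
lemma egirth_eq_three_of_triangle {α : Type*} {G : SimpleGraph α} {a b c : α}
    (hab : G.Adj a b) (hbc : G.Adj b c) (hca : G.Adj c a) : G.egirth = 3 := by
  refine le_antisymm ?_ G.three_le_egirth
  let w : G.Walk a a := .cons hab (.cons hbc (.cons hca .nil))
  have hw : w.IsCycle := by
    simp [w, SimpleGraph.Walk.isCycle_def, SimpleGraph.Walk.isTrail_def,
      hab.ne, hbc.ne, hca.ne, hab.ne', hbc.ne', hca.ne', Sym2.eq_iff]
  calc G.egirth ≤ w.length := iInf_le_of_le a (iInf_le_of_le w (iInf_le_of_le hw le_rfl))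
    _ = 3 := by simp [w]

lemma mem_span_sup_prod {R₁ R₂ : Type*} [CommRing R₁] [CommRing R₂]
    (I₁ : Ideal R₁) (I₂ : Ideal R₂) (a c : R₁) (b d : R₂) :
    ((a, b) ∈ Ideal.span {(c, d)} ⊔ I₁.prod I₂) ↔
      (a ∈ Ideal.span {c} ⊔ I₁ ∧ b ∈ Ideal.span {d} ⊔ I₂) := by
  constructor
  · intro h
    obtain ⟨u, hu, v, hv, huv⟩ := Submodule.mem_sup.mp h
    rw [Ideal.mem_span_singleton] at hu
    obtain ⟨r, hr⟩ := hu
    have hv : v.1 ∈ I₁ ∧ v.2 ∈ I₂ := hv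
    constructor
    · refine Submodule.mem_sup.mpr ⟨u.1, ?_, v.1, hv.1, congrArg Prod.fst huv⟩
      exact Ideal.mem_span_singleton.mpr ⟨r.1, congrArg Prod.fst hr⟩
    · refine Submodule.mem_sup.mpr ⟨u.2, ?_, v.2, hv.2, congrArg Prod.snd huv⟩
      exact Ideal.mem_span_singleton.mpr ⟨r.2, congrArg Prod.snd hr⟩
  · rintro ⟨h₁, h₂⟩
    obtain ⟨u₁, hu₁, v₁, hv₁, huv₁⟩ := Submodule.mem_sup.mp h₁
    obtain ⟨u₂, hu₂, v₂, hv₂, huv₂⟩ := Submodule.mem_sup.mp h₂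
    obtain ⟨r₁, hr₁⟩ := Ideal.mem_span_singleton.mp hu₁
    obtain ⟨r₂, hr₂⟩ := Ideal.mem_span_singleton.mp hu₂
    refine Submodule.mem_sup.mpr ⟨(u₁, u₂), ?_, (v₁, v₂), ?_, by simp [huv₁, huv₂, Prod.ext_iff]⟩
    · exact Ideal.mem_span_singleton.mpr ⟨(r₁, r₂), by simp [Prod.ext_iff, hr₁, hr₂]⟩
    · exact (Ideal.mem_prod _ _).mpr ⟨hv₁, hv₂⟩

lemma span_sup_prod_ne_top {R₁ R₂ : Type*} [CommRing R₁] [CommRing R₂]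
    {I₁ : Ideal R₁} {I₂ : Ideal R₂} {c : R₁} (d : R₂)
    (h : Ideal.span {c} ⊔ I₁ ≠ ⊤) :
    Ideal.span {((c, d) : R₁ × R₂)} ⊔ I₁.prod I₂ ≠ ⊤ := by
  intro htop
  have h1 : ((1, 1) : R₁ × R₂) ∈ Ideal.span {((c, d) : R₁ × R₂)} ⊔ I₁.prod I₂ := by
    rw [htop]; trivial
  exact h (Ideal.eq_top_iff_one _ |>.mpr ((mem_span_sup_prod I₁ I₂ 1 c 1 d).mp h1).1)

lemma span_sup_prod_ne_top' {R₁ R₂ : Type*} [CommRing R₁] [CommRing R₂]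
    {I₁ : Ideal R₁} {I₂ : Ideal R₂} (c : R₁) {d : R₂}
    (h : Ideal.span {d} ⊔ I₂ ≠ ⊤) :
    Ideal.span {((c, d) : R₁ × R₂)} ⊔ I₁.prod I₂ ≠ ⊤ := by
  intro htop
  have h1 : ((1, 1) : R₁ × R₂) ∈ Ideal.span {((c, d) : R₁ × R₂)} ⊔ I₁.prod I₂ := by
    rw [htop]; trivial
  exact h (Ideal.eq_top_iff_one _ |>.mpr ((mem_span_sup_prod I₁ I₂ 1 c 1 d).mp h1).2)

/-- If `I₁ ⊊ R₁`, `I₂ ⊊ R₂` are proper ideals and at least one of the graphs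
`Γ''_{I₁}(R₁)`, `Γ''_{I₂}(R₂)` has an edge, then the girth of `Γ''_{I₁×I₂}(R₁ × R₂)` is `3`. -/
theorem stmt_8 {R₁ R₂ : Type*} [CommRing R₁] [CommRing R₂]
    (I₁ : Ideal R₁) (I₂ : Ideal R₂) (hI₁ : I₁ ≠ ⊤) (hI₂ : I₂ ≠ ⊤)
    (hedge : (∃ x y : R₁, CozAdj I₁ x y) ∨ (∃ x y : R₂, CozAdj I₂ x y)) :
    (cozGraph (R₁ × R₂) (I₁.prod I₂)).egirth = 3 := by
  have h1I₁ : (1 : R₁) ∉ I₁ := fun h => hI₁ ((Ideal.eq_top_iff_one _).mpr h)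
  have h1I₂ : (1 : R₂) ∉ I₂ := fun h => hI₂ ((Ideal.eq_top_iff_one _).mpr h)
  have hspan0₁ : Ideal.span {(0 : R₁)} ⊔ I₁ = I₁ := by
    rw [Ideal.span_singleton_eq_bot.mpr rfl, bot_sup_eq]
  have hspan0₂ : Ideal.span {(0 : R₂)} ⊔ I₂ = I₂ := by
    rw [Ideal.span_singleton_eq_bot.mpr rfl, bot_sup_eq]
  rcases hedge with ⟨x, y, hxy, hx, hy⟩ | ⟨x, y, hxy, hx, hy⟩
  · -- triangle (x,0), (y,0), (0,1)
    have hxI : x ∉ I₁ := fun h => hx (le_sup_right (α := Ideal R₁) h)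
    have hyI : y ∉ I₁ := fun h => hy (le_sup_right (α := Ideal R₁) h)
    have hxT : Ideal.span {x} ⊔ I₁ ≠ ⊤ := fun h => hy (h ▸ trivial)
    have hyT : Ideal.span {y} ⊔ I₁ ≠ ⊤ := fun h => hx (h ▸ trivial)
    have h0T : Ideal.span {(0 : R₁)} ⊔ I₁ ≠ ⊤ := by rw [hspan0₁]; exact hI₁
    refine egirth_eq_three_of_triangle (G := cozGraph (R₁ × R₂) (I₁.prod I₂))
      (a := ⟨(x, 0), fun h => hxI h.1, span_sup_prod_ne_top 0 hxT⟩)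
      (b := ⟨(y, 0), fun h => hyI h.1, span_sup_prod_ne_top 0 hyT⟩)
      (c := ⟨(0, 1), fun h => h1I₂ h.2, span_sup_prod_ne_top 1 h0T⟩) ?_ ?_ ?_
    · refine ⟨by simp [Subtype.ext_iff, Prod.ext_iff, hxy], ?_, ?_⟩
      · exact fun h => hx ((mem_span_sup_prod I₁ I₂ x y 0 0).mp h).1
      · exact fun h => hy ((mem_span_sup_prod I₁ I₂ y x 0 0).mp h).1
    · refine ⟨?_, ?_, ?_⟩
      · intro h; rw [Prod.mk.injEq] at h
        exact hyI (by rw [h.1]; exact I₁.zero_mem)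
      · exact fun h => hyI (hspan0₁ ▸ ((mem_span_sup_prod I₁ I₂ y 0 0 1).mp h).1)
      · exact fun h => h1I₂ (hspan0₂ ▸ ((mem_span_sup_prod I₁ I₂ 0 y 1 0).mp h).2)
    · refine ⟨?_, ?_, ?_⟩
      · intro h; rw [Prod.mk.injEq] at h
        exact hxI (by rw [← h.1]; exact I₁.zero_mem)
      · exact fun h => h1I₂ (hspan0₂ ▸ ((mem_span_sup_prod I₁ I₂ 0 x 1 0).mp h).2)
      · exact fun h => hxI (hspan0₁ ▸ ((mem_span_sup_prod I₁ I₂ x 0 0 1).mp h).1)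
  · -- triangle (0,x), (0,y), (1,0)
    have hxI : x ∉ I₂ := fun h => hx (le_sup_right (α := Ideal R₂) h)
    have hyI : y ∉ I₂ := fun h => hy (le_sup_right (α := Ideal R₂) h)
    have hxT : Ideal.span {x} ⊔ I₂ ≠ ⊤ := fun h => hy (h ▸ trivial)
    have hyT : Ideal.span {y} ⊔ I₂ ≠ ⊤ := fun h => hx (h ▸ trivial)
    have h0T : Ideal.span {(0 : R₂)} ⊔ I₂ ≠ ⊤ := by rw [hspan0₂]; exact hI₂
    refine egirth_eq_three_of_triangle (G := cozGraph (R₁ × R₂) (I₁.prod I₂))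
      (a := ⟨(0, x), fun h => hxI h.2, span_sup_prod_ne_top' 0 hxT⟩)
      (b := ⟨(0, y), fun h => hyI h.2, span_sup_prod_ne_top' 0 hyT⟩)
      (c := ⟨(1, 0), fun h => h1I₁ h.1, span_sup_prod_ne_top' 1 h0T⟩) ?_ ?_ ?_
    · refine ⟨by simp [Subtype.ext_iff, Prod.ext_iff, hxy], ?_, ?_⟩
      · exact fun h => hx ((mem_span_sup_prod I₁ I₂ 0 0 x y).mp h).2
      · exact fun h => hy ((mem_span_sup_prod I₁ I₂ 0 0 y x).mp h).2
    · refine ⟨?_, ?_, ?_⟩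
      · intro h; rw [Prod.mk.injEq] at h
        exact hyI (by rw [h.2]; exact I₂.zero_mem)
      · exact fun h => hyI (hspan0₂ ▸ ((mem_span_sup_prod I₁ I₂ 0 1 y 0).mp h).2)
      · exact fun h => h1I₁ (hspan0₁ ▸ ((mem_span_sup_prod I₁ I₂ 1 0 0 y).mp h).1)
    · refine ⟨?_, ?_, ?_⟩
      · intro h; rw [Prod.mk.injEq] at h
        exact hxI (by rw [← h.2]; exact I₂.zero_mem)
      · exact fun h => h1I₁ (hspan0₁ ▸ ((mem_span_sup_prod I₁ I₂ 1 0 0 x).mp h).1)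
      · exact fun h => hxI (hspan0₂ ▸ ((mem_span_sup_prod I₁ I₂ 0 1 x 0).mp h).2)
end

section
/- Let R₁, R₂ be commutative rings with identity and let I₁ ⊊ R₁, I₂ ⊊ R₂ be proper ideals. If there exist x ∈ R₁ ∖ I₁ with xR₁ + I₁ ≠ R₁ and y ∈ R₂ ∖ I₂ with yR₂ + I₂ ≠ R₂ (i.e., both Γ''_{I₁}(R₁) and Γ''_{I₂}(R₂) have nonempty vertex sets), then the girth of Γ''_{I₁×I₂}(R₁ × R₂) is at most 4. -/
lemma span_sup_prod {R₁ R₂ : Type*} [CommRing R₁] [CommRing R₂]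
    (I₁ : Ideal R₁) (I₂ : Ideal R₂) (a : R₁) (b : R₂) :
    Ideal.span {(a, b)} ⊔ I₁.prod I₂
      = (Ideal.span {a} ⊔ I₁).prod (Ideal.span {b} ⊔ I₂) := by
  apply le_antisymm
  · apply sup_le
    · rw [Ideal.span_le, Set.singleton_subset_iff]
      exact (Ideal.mem_prod _ _).mpr ⟨Ideal.mem_sup_left (Ideal.subset_span rfl),
        Ideal.mem_sup_left (Ideal.subset_span rfl)⟩
    · rintro ⟨c, d⟩ h
      rw [Ideal.mem_prod _ _] at h ⊢
      exact ⟨Ideal.mem_sup_right h.1, Ideal.mem_sup_right h.2⟩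
  · rintro ⟨c, d⟩ h
    rw [Ideal.mem_prod _ _] at h
    obtain ⟨p, hp, i, hi, hc⟩ := Submodule.mem_sup.mp h.1
    obtain ⟨q, hq, j, hj, hd⟩ := Submodule.mem_sup.mp h.2
    obtain ⟨t, ht⟩ := Ideal.mem_span_singleton'.mp hp
    obtain ⟨s, hs⟩ := Ideal.mem_span_singleton'.mp hq
    refine Submodule.mem_sup.mpr ⟨(t, s) * (a, b),
      Ideal.mul_mem_left _ _ (Ideal.subset_span rfl), (i, j),
      (Ideal.mem_prod _ _).mpr ⟨hi, hj⟩, ?_⟩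
    simp only [Prod.mk_mul_mk, Prod.mk_add_mk]
    rw [ht, hs, hc, hd]

/-- If `I₁ ⊊ R₁`, `I₂ ⊊ R₂` are proper ideals and both `Γ''_{I₁}(R₁)` and
`Γ''_{I₂}(R₂)` have nonempty vertex sets, then the girth of `Γ''_{I₁×I₂}(R₁ × R₂)` is at
most `4`. -/
theorem stmt_9 {R₁ R₂ : Type*} [CommRing R₁] [CommRing R₂]
    (I₁ : Ideal R₁) (I₂ : Ideal R₂) (hI₁ : I₁ ≠ ⊤) (hI₂ : I₂ ≠ ⊤)
    (hx : ∃ x : R₁, CozVertex I₁ x) (hy : ∃ y : R₂, CozVertex I₂ y) :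
    (cozGraph (R₁ × R₂) (I₁.prod I₂)).egirth ≤ 4 := by
  obtain ⟨x, hx1, hx2⟩ := hx
  obtain ⟨y, hy1, hy2⟩ := hy
  have h1I₁ : (1 : R₁) ∉ I₁ := fun h => hI₁ (Ideal.eq_top_of_isUnit_mem _ h isUnit_one)
  have h1I₂ : (1 : R₂) ∉ I₂ := fun h => hI₂ (Ideal.eq_top_of_isUnit_mem _ h isUnit_one)
  have h1Sx : (1 : R₁) ∉ Ideal.span {x} ⊔ I₁ := fun h =>
    hx2 (Ideal.eq_top_of_isUnit_mem _ h isUnit_one)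
  have h1Sy : (1 : R₂) ∉ Ideal.span {y} ⊔ I₂ := fun h =>
    hy2 (Ideal.eq_top_of_isUnit_mem _ h isUnit_one)
  have hx0 : x ≠ 0 := fun h => hx1 (h ▸ I₁.zero_mem)
  have hx1' : x ≠ 1 := fun h => h1Sx (h ▸ Ideal.mem_sup_left (Ideal.subset_span rfl))
  have hy0 : y ≠ 0 := fun h => hy1 (h ▸ I₂.zero_mem)
  have hy1' : y ≠ 1 := fun h => h1Sy (h ▸ Ideal.mem_sup_left (Ideal.subset_span rfl))
  have h10 : (1 : R₁) ≠ 0 := fun h => h1I₁ (h ▸ I₁.zero_mem)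
  -- membership simp lemma
  have mem : ∀ (a c : R₁) (b d : R₂), ((c, d) ∈ Ideal.span {(a, b)} ⊔ I₁.prod I₂
      ↔ c ∈ Ideal.span {a} ⊔ I₁ ∧ d ∈ Ideal.span {b} ⊔ I₂) := fun a c b d => by
    rw [span_sup_prod, Ideal.mem_prod _ _]
  have ntop : ∀ (a : R₁) (b : R₂), (1 : R₁) ∉ Ideal.span {a} ⊔ I₁ ∨
      (1 : R₂) ∉ Ideal.span {b} ⊔ I₂ →
      Ideal.span {((a, b) : R₁ × R₂)} ⊔ I₁.prod I₂ ≠ ⊤ := by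
    intro a b h htop
    have : ((1, 1) : R₁ × R₂) ∈ Ideal.span {(a, b)} ⊔ I₁.prod I₂ := htop ▸ trivial
    rw [mem] at this
    rcases h with h | h
    · exact h this.1
    · exact h this.2
  have hz1 : (0 : R₁) ∈ Ideal.span {(0 : R₁)} ⊔ I₁ := Ideal.mem_sup_right I₁.zero_mem
  have hz2 : (0 : R₂) ∈ Ideal.span {(0 : R₂)} ⊔ I₂ := Ideal.mem_sup_right I₂.zero_mem
  -- the four vertices
  have V1 : CozVertex (I₁.prod I₂) (x, 0) :=
    ⟨fun h => hx1 ((Ideal.mem_prod _ _).mp h).1, ntop _ _ (Or.inl h1Sx)⟩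
  have V2 : CozVertex (I₁.prod I₂) (0, 1) :=
    ⟨fun h => h1I₂ ((Ideal.mem_prod _ _).mp h).2, ntop _ _ (Or.inl (by
      simp only [Ideal.span_singleton_eq_bot.mpr rfl, bot_sup_eq]; exact h1I₁))⟩
  have V3 : CozVertex (I₁.prod I₂) (1, 0) :=
    ⟨fun h => h1I₁ ((Ideal.mem_prod _ _).mp h).1, ntop _ _ (Or.inr (by
      simp only [Ideal.span_singleton_eq_bot.mpr rfl, bot_sup_eq]; exact h1I₂))⟩
  have V4 : CozVertex (I₁.prod I₂) (0, y) :=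
    ⟨fun h => hy1 ((Ideal.mem_prod _ _).mp h).2, ntop _ _ (Or.inr h1Sy)⟩
  have z1 : Ideal.span {(0:R₁)} ⊔ I₁ = I₁ := by
    rw [Ideal.span_singleton_eq_bot.mpr rfl, bot_sup_eq]
  have z2 : Ideal.span {(0:R₂)} ⊔ I₂ = I₂ := by
    rw [Ideal.span_singleton_eq_bot.mpr rfl, bot_sup_eq]
  set G := cozGraph (R₁ × R₂) (I₁.prod I₂) with hG
  let v1 : {z : R₁ × R₂ // CozVertex (I₁.prod I₂) z} := ⟨(x, 0), V1⟩
  let v2 : {z : R₁ × R₂ // CozVertex (I₁.prod I₂) z} := ⟨(0, 1), V2⟩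
  let v3 : {z : R₁ × R₂ // CozVertex (I₁.prod I₂) z} := ⟨(1, 0), V3⟩
  let v4 : {z : R₁ × R₂ // CozVertex (I₁.prod I₂) z} := ⟨(0, y), V4⟩
  have A12 : G.Adj v1 v2 := ⟨fun h => hx0 (congrArg Prod.fst h),
    fun h => hx1 (z1 ▸ ((mem _ _ _ _).mp h).1),
    fun h => h1I₂ (z2 ▸ ((mem _ _ _ _).mp h).2)⟩
  have A23 : G.Adj v2 v3 := ⟨fun h => h10 (congrArg Prod.fst h).symm,
    fun h => h1I₂ (z2 ▸ ((mem _ _ _ _).mp h).2),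
    fun h => h1I₁ (z1 ▸ ((mem _ _ _ _).mp h).1)⟩
  have A34 : G.Adj v3 v4 := ⟨fun h => h10 (congrArg Prod.fst h),
    fun h => h1I₁ (z1 ▸ ((mem _ _ _ _).mp h).1),
    fun h => hy1 (z2 ▸ ((mem _ _ _ _).mp h).2)⟩
  have A41 : G.Adj v4 v1 := ⟨fun h => hx0 ((congrArg Prod.fst h).symm),
    fun h => hy1 (z2 ▸ ((mem _ _ _ _).mp h).2),
    fun h => hx1 (z1 ▸ ((mem _ _ _ _).mp h).1)⟩
  let w : G.Walk v1 v1 :=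
    SimpleGraph.Walk.cons A12 (SimpleGraph.Walk.cons A23
      (SimpleGraph.Walk.cons A34 (SimpleGraph.Walk.cons A41 SimpleGraph.Walk.nil)))
  have ne12 : v1 ≠ v2 := fun h => hx0 (congrArg Prod.fst (congrArg Subtype.val h))
  have ne13 : v1 ≠ v3 := fun h => hx1' (congrArg Prod.fst (congrArg Subtype.val h))
  have ne14 : v1 ≠ v4 := fun h => hx0 (congrArg Prod.fst (congrArg Subtype.val h))
  have ne23 : v2 ≠ v3 := fun h => h10 (congrArg Prod.fst (congrArg Subtype.val h)).symm
  have ne24 : v2 ≠ v4 := fun h => hy1' (congrArg Prod.snd (congrArg Subtype.val h)).symm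
  have ne34 : v3 ≠ v4 := fun h => h10 (congrArg Prod.fst (congrArg Subtype.val h))
  have hcyc : w.IsCycle := by
    rw [SimpleGraph.Walk.isCycle_def]
    refine ⟨⟨?_⟩, by simp [w], ?_⟩
    · simp [w, ne12, ne13, ne14, ne23, ne24, ne34, ne12.symm, ne13.symm, ne14.symm,
        ne23.symm, ne24.symm, ne34.symm, Sym2.eq_iff]
    · simp [w, SimpleGraph.Walk.support_cons, ne23, ne24, ne34, ne12.symm, ne13.symm, ne14.symm]
  have hle : G.egirth ≤ (w.length : ℕ∞) := by
    rw [SimpleGraph.egirth]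
    exact iInf_le_of_le v1 (iInf_le_of_le w (iInf_le_of_le hcyc le_rfl))
  simpa [w] using hle
end

section
/- Let R₁, R₂ be commutative rings with identity and let I₁ ⊊ R₁, I₂ ⊊ R₂ be proper ideals. Then the graph Γ''_{I₁×I₂}(R₁ × R₂) is connected and its diameter is at most 3. -/
section Aux

variable {R₁ R₂ : Type*} [CommRing R₁] [CommRing R₂] (I₁ : Ideal R₁) (I₂ : Ideal R₂)

lemma span_zero_sup {R : Type*} [CommRing R] (I : Ideal R) :
    Ideal.span {(0 : R)} ⊔ I = I := by
  rw [Ideal.span_singleton_eq_bot.mpr rfl, bot_sup_eq]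

lemma coz_sup_mem (a c : R₁) (b d : R₂) :
    (c, d) ∈ Ideal.span {(a, b)} ⊔ (I₁.prod I₂) ↔
      c ∈ Ideal.span {a} ⊔ I₁ ∧ d ∈ Ideal.span {b} ⊔ I₂ := by
  constructor
  · intro h
    obtain ⟨u, hu, v, hv, huv⟩ := Submodule.mem_sup.mp h
    rw [Ideal.mem_span_singleton] at hu
    obtain ⟨w, hw⟩ := hu
    rw [Ideal.mem_prod] at hv
    have h1 : u.1 + v.1 = c := congrArg Prod.fst huv
    have h2 : u.2 + v.2 = d := congrArg Prod.snd huv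
    constructor
    · exact Submodule.mem_sup.mpr ⟨u.1, Ideal.mem_span_singleton.mpr
        ⟨w.1, by rw [hw]; exact (Prod.fst_mul _ _)⟩, v.1, hv.1, h1⟩
    · exact Submodule.mem_sup.mpr ⟨u.2, Ideal.mem_span_singleton.mpr
        ⟨w.2, by rw [hw]; exact (Prod.snd_mul _ _)⟩, v.2, hv.2, h2⟩
  · rintro ⟨h1, h2⟩
    obtain ⟨u1, hu1, v1, hv1, huv1⟩ := Submodule.mem_sup.mp h1
    obtain ⟨u2, hu2, v2, hv2, huv2⟩ := Submodule.mem_sup.mp h2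
    obtain ⟨r, hr⟩ := Ideal.mem_span_singleton.mp hu1
    obtain ⟨s, hs⟩ := Ideal.mem_span_singleton.mp hu2
    refine Submodule.mem_sup.mpr ⟨(u1, u2), Ideal.mem_span_singleton.mpr ⟨(r, s), ?_⟩,
      (v1, v2), (Ideal.mem_prod _ _).mpr ⟨hv1, hv2⟩, ?_⟩
    · exact Prod.ext hr hs
    · exact Prod.ext huv1 huv2

lemma coz_sup_top (a : R₁) (b : R₂) :
    Ideal.span {(a, b)} ⊔ (I₁.prod I₂) = ⊤ ↔
      (Ideal.span {a} ⊔ I₁ = ⊤ ∧ Ideal.span {b} ⊔ I₂ = ⊤) := by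
  simp only [Ideal.eq_top_iff_one]
  have : (1 : R₁ × R₂) = ((1 : R₁), (1 : R₂)) := rfl
  rw [this, coz_sup_mem]

variable (hI₁ : I₁ ≠ ⊤) (hI₂ : I₂ ≠ ⊤)

include hI₁ hI₂ in
lemma e1_vertex : CozVertex (I₁.prod I₂) ((1 : R₁), (0 : R₂)) := by
  constructor
  · rw [Ideal.mem_prod]
    rintro ⟨h, -⟩
    exact hI₁ (Ideal.eq_top_iff_one _ |>.mpr h)
  · rw [Ne, coz_sup_top]
    rintro ⟨-, h⟩
    rw [span_zero_sup] at h
    exact hI₂ h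

include hI₁ hI₂ in
lemma e2_vertex : CozVertex (I₁.prod I₂) ((0 : R₁), (1 : R₂)) := by
  constructor
  · rw [Ideal.mem_prod]
    rintro ⟨-, h⟩
    exact hI₂ (Ideal.eq_top_iff_one _ |>.mpr h)
  · rw [Ne, coz_sup_top]
    rintro ⟨h, -⟩
    rw [span_zero_sup] at h
    exact hI₁ h

include hI₁ hI₂ in
lemma e1_adj_e2 : CozAdj (I₁.prod I₂) ((1 : R₁), (0 : R₂)) ((0 : R₁), (1 : R₂)) := by
  refine ⟨?_, ?_, ?_⟩
  · intro h
    injection h with h1 h2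
    exact hI₁ (Ideal.eq_top_iff_one _ |>.mpr (h1 ▸ I₁.zero_mem))
  · rw [coz_sup_mem]
    rintro ⟨h, -⟩
    rw [span_zero_sup] at h
    exact hI₁ (Ideal.eq_top_iff_one _ |>.mpr h)
  · rw [coz_sup_mem]
    rintro ⟨-, h⟩
    rw [span_zero_sup] at h
    exact hI₂ (Ideal.eq_top_iff_one _ |>.mpr h)

include hI₁ hI₂ in
/-- Every vertex is adjacent to `(1,0)` or to `(0,1)`. -/
lemma attach (a : R₁) (b : R₂) (hv : CozVertex (I₁.prod I₂) (a, b)) :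
    CozAdj (I₁.prod I₂) (a, b) ((1 : R₁), (0 : R₂)) ∨
      CozAdj (I₁.prod I₂) (a, b) ((0 : R₁), (1 : R₂)) := by
  obtain ⟨hmem, htop⟩ := hv
  rw [Ideal.mem_prod, not_and_or] at hmem
  rw [Ne, coz_sup_top, not_and_or] at htop
  have key : (b ∉ I₂ ∧ Ideal.span {a} ⊔ I₁ ≠ ⊤) ∨
      (a ∉ I₁ ∧ Ideal.span {b} ⊔ I₂ ≠ ⊤) := by
    by_cases hb : b ∈ I₂
    · refine Or.inr ⟨hmem.resolve_right (fun h => h hb), ?_⟩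
      rw [sup_eq_right.mpr ((Ideal.span_singleton_le_iff_mem _).mpr hb)]
      exact hI₂
    · by_cases ha : Ideal.span {a} ⊔ I₁ = ⊤
      · refine Or.inr ⟨?_, htop.resolve_left (fun h => h ha)⟩
        intro haI
        rw [sup_eq_right.mpr ((Ideal.span_singleton_le_iff_mem _).mpr haI)] at ha
        exact hI₁ ha
      · exact Or.inl ⟨hb, ha⟩
  rcases key with ⟨hb, ha⟩ | ⟨ha, hb⟩
  · refine Or.inl ⟨?_, ?_, ?_⟩
    · intro h
      injection h with h1 h2
      exact hb (h2 ▸ I₂.zero_mem)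
    · rw [coz_sup_mem]
      rintro ⟨-, h⟩
      rw [span_zero_sup] at h
      exact hb h
    · rw [coz_sup_mem]
      rintro ⟨h, -⟩
      exact ha (Ideal.eq_top_iff_one _ |>.mpr h)
  · refine Or.inr ⟨?_, ?_, ?_⟩
    · intro h
      injection h with h1 h2
      exact ha (h1 ▸ I₁.zero_mem)
    · rw [coz_sup_mem]
      rintro ⟨h, -⟩
      rw [span_zero_sup] at h
      exact ha h
    · rw [coz_sup_mem]
      rintro ⟨-, h⟩
      exact hb (Ideal.eq_top_iff_one _ |>.mpr h)

end Aux

/-- For proper ideals `I₁ ⊊ R₁` and `I₂ ⊊ R₂`, the graph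
`Γ''_{I₁×I₂}(R₁ × R₂)` is connected and its diameter is at most `3`. -/
theorem stmt_10 {R₁ R₂ : Type*} [CommRing R₁] [CommRing R₂]
    (I₁ : Ideal R₁) (I₂ : Ideal R₂) (hI₁ : I₁ ≠ ⊤) (hI₂ : I₂ ≠ ⊤) :
    (cozGraph (R₁ × R₂) (I₁.prod I₂)).Connected ∧
      (cozGraph (R₁ × R₂) (I₁.prod I₂)).ediam ≤ 3 := by
  set G := cozGraph (R₁ × R₂) (I₁.prod I₂) with hG
  let e1 : {x : R₁ × R₂ // CozVertex (I₁.prod I₂) x} :=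
    ⟨((1 : R₁), (0 : R₂)), e1_vertex I₁ I₂ hI₁ hI₂⟩
  let e2 : {x : R₁ × R₂ // CozVertex (I₁.prod I₂) x} :=
    ⟨((0 : R₁), (1 : R₂)), e2_vertex I₁ I₂ hI₁ hI₂⟩
  have hadj : G.Adj e1 e2 := e1_adj_e2 I₁ I₂ hI₁ hI₂
  have key : ∀ u, G.Adj u e1 ∨ G.Adj u e2 := by
    rintro ⟨⟨a, b⟩, hv⟩
    exact attach I₁ I₂ hI₁ hI₂ a b hv
  have walkto : ∀ u v, ∃ w : G.Walk u v, w.length ≤ 3 := by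
    intro u v
    rcases key u with hu | hu <;> rcases key v with hv | hv
    · exact ⟨hu.toWalk.append hv.symm.toWalk, by simp⟩
    · exact ⟨hu.toWalk.append (hadj.toWalk.append hv.symm.toWalk), by simp⟩
    · exact ⟨hu.toWalk.append (hadj.symm.toWalk.append hv.symm.toWalk), by simp⟩
    · exact ⟨hu.toWalk.append hv.symm.toWalk, by simp⟩
  constructor
  · rw [SimpleGraph.connected_iff]
    refine ⟨fun u v => ?_, ⟨e1⟩⟩
    obtain ⟨w, -⟩ := walkto u v
    exact ⟨w⟩
  · apply SimpleGraph.ediam_le_of_edist_le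
    intro u v
    obtain ⟨w, hw⟩ := walkto u v
    exact le_trans w.edist_le (by exact_mod_cast hw)
end

section
/- Let R₁ and R₂ be nonzero commutative rings with identity. Then the cozero-divisor graph Γ'(R₁ × R₂) is connected and its diameter is at most 3. -/
/-- The cozero-divisor graph `Γ'(R)` of a commutative ring `R`: the vertices are the
nonzero non-unit elements, and distinct vertices `x, y` are adjacent iff `x ∉ yR` and
`y ∉ xR`. -/
def cozeroDivisorGraph (R : Type*) [CommRing R] :
    SimpleGraph {x : R // x ≠ 0 ∧ ¬IsUnit x} where
  Adj a b := a.1 ≠ b.1 ∧ a.1 ∉ Ideal.span {b.1} ∧ b.1 ∉ Ideal.span {a.1}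
  symm := ⟨fun a b h => ⟨h.1.symm, h.2.2, h.2.1⟩⟩
  loopless := ⟨fun a h => h.1 rfl⟩

lemma prod_isUnit_iff {M N : Type*} [CommMonoid M] [CommMonoid N] (a : M) (b : N) :
    IsUnit (a, b) ↔ IsUnit a ∧ IsUnit b := by
  simp only [isUnit_iff_exists_inv, Prod.exists, Prod.mk_mul_mk, Prod.mk_eq_one]
  aesop

section Aux

variable {R₁ R₂ : Type*} [CommRing R₁] [CommRing R₂] [Nontrivial R₁] [Nontrivial R₂]

/-- The vertex `(1, 0)`. -/
def czV₁ : {x : R₁ × R₂ // x ≠ 0 ∧ ¬IsUnit x} :=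
  ⟨(1, 0), by simp [Prod.ext_iff, prod_isUnit_iff]⟩

/-- The vertex `(0, 1)`. -/
def czV₂ : {x : R₁ × R₂ // x ≠ 0 ∧ ¬IsUnit x} :=
  ⟨(0, 1), by simp [Prod.ext_iff, prod_isUnit_iff]⟩

lemma czAdj_iff (a b : {x : R₁ × R₂ // x ≠ 0 ∧ ¬IsUnit x}) :
    (cozeroDivisorGraph (R₁ × R₂)).Adj a b ↔
      a.1 ≠ b.1 ∧ ¬(b.1 ∣ a.1) ∧ ¬(a.1 ∣ b.1) := by
  simp [cozeroDivisorGraph, Ideal.mem_span_singleton]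

lemma czAdj_v₁_v₂ : (cozeroDivisorGraph (R₁ × R₂)).Adj czV₁ czV₂ := by
  rw [czAdj_iff]
  refine ⟨?_, ?_, ?_⟩
  · simp [czV₁, czV₂, Prod.ext_iff]
  · rintro ⟨⟨c, d⟩, h⟩
    simp [czV₁, czV₂, Prod.ext_iff] at h
  · rintro ⟨⟨c, d⟩, h⟩
    simp [czV₁, czV₂, Prod.ext_iff] at h

lemma czAdj_key (x : {x : R₁ × R₂ // x ≠ 0 ∧ ¬IsUnit x}) :
    (cozeroDivisorGraph (R₁ × R₂)).Adj x czV₁ ∨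
      (cozeroDivisorGraph (R₁ × R₂)).Adj x czV₂ := by
  obtain ⟨⟨a, b⟩, hne, hnu⟩ := x
  rw [prod_isUnit_iff, not_and_or] at hnu
  have hab : a ≠ 0 ∨ b ≠ 0 := by
    rw [← not_and_or]
    intro ⟨h1, h2⟩
    exact hne (by simp [Prod.ext_iff, h1, h2])
  -- case analysis
  by_cases hb : b ≠ 0 ∧ ¬IsUnit a
  · left
    rw [czAdj_iff]
    refine ⟨?_, ?_, ?_⟩
    · simp only [czV₁, Prod.mk.injEq, ne_eq, not_and]
      intro h1; exact absurd (h1 ▸ isUnit_one) hb.2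
    · rintro ⟨⟨c, d⟩, h⟩
      simp only [czV₁, Prod.mk_mul_mk, Prod.ext_iff] at h
      exact hb.1 (by simpa using h.2)
    · rintro ⟨⟨c, d⟩, h⟩
      simp only [czV₁, Prod.mk_mul_mk, Prod.ext_iff] at h
      exact hb.2 (IsUnit.of_mul_eq_one (a := a) c h.1.symm)
  · right
    have hb' : b = 0 ∨ IsUnit a := by
      rcases not_and_or.mp hb with h | h
      · exact Or.inl (not_not.mp h)
      · exact Or.inr (not_not.mp h)
    have ha : a ≠ 0 ∧ ¬IsUnit b := by
      rcases hb' with h | h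
      · refine ⟨?_, ?_⟩
        · rcases hab with h' | h'
          · exact h'
          · exact absurd h h'
        · rw [h]; exact fun hu => not_isUnit_zero hu
      · refine ⟨fun h0 => not_isUnit_zero (h0 ▸ h), ?_⟩
        rcases hnu with h' | h'
        · exact absurd h h'
        · exact h'
    rw [czAdj_iff]
    refine ⟨?_, ?_, ?_⟩
    · simp only [czV₂, Prod.mk.injEq, ne_eq, not_and]
      intro _ h2; exact absurd (h2 ▸ isUnit_one) ha.2
    · rintro ⟨⟨c, d⟩, h⟩
      simp only [czV₂, Prod.mk_mul_mk, Prod.ext_iff] at h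
      exact ha.1 (by simpa using h.1)
    · rintro ⟨⟨c, d⟩, h⟩
      simp only [czV₂, Prod.mk_mul_mk, Prod.ext_iff] at h
      exact ha.2 (IsUnit.of_mul_eq_one (a := b) d h.2.symm)

lemma cz_edist_le (x y : {x : R₁ × R₂ // x ≠ 0 ∧ ¬IsUnit x}) :
    (cozeroDivisorGraph (R₁ × R₂)).edist x y ≤ 3 := by
  set G := cozeroDivisorGraph (R₁ × R₂)
  have key : ∀ (u : {x : R₁ × R₂ // x ≠ 0 ∧ ¬IsUnit x})
      (v w : {x : R₁ × R₂ // x ≠ 0 ∧ ¬IsUnit x}), G.Adj u v → G.Adj v w →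
      G.edist u w ≤ 2 := fun u v w h1 h2 =>
    calc G.edist u w ≤ G.edist u v + G.edist v w := G.edist_triangle
    _ ≤ 1 + 1 := add_le_add (le_of_eq (SimpleGraph.edist_eq_one_iff_adj.mpr h1))
        (le_of_eq (SimpleGraph.edist_eq_one_iff_adj.mpr h2))
    _ = 2 := by norm_num
  have hv : G.Adj (czV₁ : {x : R₁ × R₂ // x ≠ 0 ∧ ¬IsUnit x}) czV₂ := czAdj_v₁_v₂
  rcases czAdj_key x with hx | hx <;> rcases czAdj_key y with hy | hy
  · calc G.edist x y ≤ G.edist x czV₁ + G.edist czV₁ y := G.edist_triangle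
      _ ≤ 1 + 1 := add_le_add (le_of_eq (SimpleGraph.edist_eq_one_iff_adj.mpr hx))
          (le_of_eq (SimpleGraph.edist_eq_one_iff_adj.mpr hy.symm))
      _ ≤ 3 := by norm_num
  · calc G.edist x y ≤ G.edist x czV₁ + G.edist czV₁ y := G.edist_triangle
      _ ≤ 1 + 2 := add_le_add (le_of_eq (SimpleGraph.edist_eq_one_iff_adj.mpr hx))
          (key _ czV₂ _ hv hy.symm)
      _ = 3 := by norm_num
  · calc G.edist x y ≤ G.edist x czV₂ + G.edist czV₂ y := G.edist_triangle
      _ ≤ 1 + 2 := add_le_add (le_of_eq (SimpleGraph.edist_eq_one_iff_adj.mpr hx))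
          (key _ czV₁ _ hv.symm hy.symm)
      _ = 3 := by norm_num
  · calc G.edist x y ≤ G.edist x czV₂ + G.edist czV₂ y := G.edist_triangle
      _ ≤ 1 + 1 := add_le_add (le_of_eq (SimpleGraph.edist_eq_one_iff_adj.mpr hx))
          (le_of_eq (SimpleGraph.edist_eq_one_iff_adj.mpr hy.symm))
      _ ≤ 3 := by norm_num

end Aux

/-- For nonzero commutative rings `R₁`, `R₂`, the cozero-divisor graph
`Γ'(R₁ × R₂)` is connected and its diameter is at most `3`. -/
theorem stmt_11 {R₁ R₂ : Type*} [CommRing R₁] [CommRing R₂]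
    [Nontrivial R₁] [Nontrivial R₂] :
    (cozeroDivisorGraph (R₁ × R₂)).Connected ∧
      (cozeroDivisorGraph (R₁ × R₂)).ediam ≤ 3 := by
  haveI : Nonempty {x : R₁ × R₂ // x ≠ 0 ∧ ¬IsUnit x} := ⟨czV₁⟩
  refine ⟨⟨fun x y => ?_⟩, SimpleGraph.ediam_le_of_edist_le cz_edist_le⟩
  exact SimpleGraph.reachable_of_edist_ne_top
    (lt_of_le_of_lt (cz_edist_le x y) (lt_top_iff_ne_top.mpr (by decide) : (3 : ℕ∞) < ⊤)).ne
end

section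
/- Let R be a commutative ring with identity and I an ideal of R with at least three elements. If there exist x, y ∈ R such that x + I and y + I are distinct adjacent vertices of the cozero-divisor graph Γ'(R/I), then Γ''_I(R) contains the complete bipartite graph K^{3,3} as a subgraph: for any two distinct nonzero elements i, j of I, the six elements x, x+i, x+j, y, y+i, y+j are distinct vertices of Γ''_I(R) and each of x, x+i, x+j is adjacent to each of y, y+i, y+j. -/
private lemma mem_sup_iff_dvd {R : Type*} [CommRing R] (I : Ideal R) (u v : R) :
    u ∈ Ideal.span {v} ⊔ I ↔ Ideal.Quotient.mk I v ∣ Ideal.Quotient.mk I u := by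
  constructor
  · intro h
    obtain ⟨a, ha, b, hb, rfl⟩ := Submodule.mem_sup.mp h
    obtain ⟨r, rfl⟩ := Ideal.mem_span_singleton.mp ha
    refine ⟨Ideal.Quotient.mk I r, ?_⟩
    simp [Ideal.Quotient.eq_zero_iff_mem.mpr hb]
  · rintro ⟨s, hs⟩
    obtain ⟨r, rfl⟩ := Ideal.Quotient.mk_surjective s
    have hmem : u - v * r ∈ I := by
      rw [← Ideal.Quotient.eq_zero_iff_mem]
      simp [hs]
    have hv : v * r ∈ Ideal.span {v} := Ideal.mem_span_singleton.mpr ⟨r, rfl⟩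
    have := Submodule.add_mem_sup hv hmem
    simpa using this

private lemma sup_ne_top_of_not_isUnit {R : Type*} [CommRing R] (I : Ideal R) (x : R)
    (hxu : ¬ IsUnit (Ideal.Quotient.mk I x)) : Ideal.span {x} ⊔ I ≠ ⊤ := by
  intro h
  have h1 : (1 : R) ∈ Ideal.span {x} ⊔ I := h ▸ Submodule.mem_top
  rw [mem_sup_iff_dvd] at h1
  exact hxu (isUnit_of_dvd_one (by simpa using h1))

/-- Let `I` be an ideal of `R` with at least three elements, and let
`x + I`, `y + I` be distinct adjacent vertices of the cozero-divisor graph `Γ'(R/I)`. Then for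
any two distinct nonzero `i, j ∈ I`, the six elements `x, x+i, x+j, y, y+i, y+j` are distinct
vertices of `Γ''_I(R)` and each of `x, x+i, x+j` is adjacent to each of `y, y+i, y+j`; that
is, `Γ''_I(R)` contains `K^{3,3}` as a subgraph. -/
theorem stmt_12 {R : Type*} [CommRing R] (I : Ideal R)
    (hcard : ∃ a b c : R, a ∈ I ∧ b ∈ I ∧ c ∈ I ∧ a ≠ b ∧ a ≠ c ∧ b ≠ c)
    (x y : R)
    (hx0 : Ideal.Quotient.mk I x ≠ 0) (hxu : ¬ IsUnit (Ideal.Quotient.mk I x))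
    (hy0 : Ideal.Quotient.mk I y ≠ 0) (hyu : ¬ IsUnit (Ideal.Quotient.mk I y))
    (hne : Ideal.Quotient.mk I x ≠ Ideal.Quotient.mk I y)
    (hxy : Ideal.Quotient.mk I x ∉ Ideal.span {Ideal.Quotient.mk I y})
    (hyx : Ideal.Quotient.mk I y ∉ Ideal.span {Ideal.Quotient.mk I x}) :
    ∀ i j : R, i ∈ I → j ∈ I → i ≠ 0 → j ≠ 0 → i ≠ j →
      ([x, x + i, x + j, y, y + i, y + j].Pairwise (· ≠ ·) ∧
        (∀ z ∈ [x, x + i, x + j, y, y + i, y + j], CozVertex I z) ∧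
        (∀ u ∈ [x, x + i, x + j], ∀ v ∈ [y, y + i, y + j], CozAdj I u v)) := by
  intro i j hi hj hi0 hj0 hij
  have hmi : Ideal.Quotient.mk I i = 0 := Ideal.Quotient.eq_zero_iff_mem.mpr hi
  have hmj : Ideal.Quotient.mk I j = 0 := Ideal.Quotient.eq_zero_iff_mem.mpr hj
  have hmxi : Ideal.Quotient.mk I (x + i) = Ideal.Quotient.mk I x := by simp [hmi]
  have hmxj : Ideal.Quotient.mk I (x + j) = Ideal.Quotient.mk I x := by simp [hmj]
  have hmyi : Ideal.Quotient.mk I (y + i) = Ideal.Quotient.mk I y := by simp [hmi]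
  have hmyj : Ideal.Quotient.mk I (y + j) = Ideal.Quotient.mk I y := by simp [hmj]
  -- x-group and y-group are distinct mod I
  have hXY : ∀ a b : R, Ideal.Quotient.mk I a = Ideal.Quotient.mk I x →
      Ideal.Quotient.mk I b = Ideal.Quotient.mk I y → a ≠ b := by
    intro a b ha hb h
    exact hne (by rw [← ha, ← hb, h])
  refine ⟨?_, ?_, ?_⟩
  · -- pairwise distinct
    refine List.Pairwise.cons ?_ (List.Pairwise.cons ?_ (List.Pairwise.cons ?_
      (List.Pairwise.cons ?_ (List.Pairwise.cons ?_ (List.Pairwise.cons ?_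
      List.Pairwise.nil))))) <;> intro z hz <;>
      simp only [List.mem_cons, List.not_mem_nil, or_false] at hz
    · rcases hz with h | h | h | h | h <;> rw [h]
      · exact fun h => hi0 (by linear_combination -h)
      · exact fun h => hj0 (by linear_combination -h)
      · exact hXY x y rfl rfl
      · exact hXY x (y + i) rfl hmyi
      · exact hXY x (y + j) rfl hmyj
    · rcases hz with h | h | h | h <;> rw [h]
      · exact fun h => hij (by linear_combination h)
      · exact hXY (x + i) y hmxi rfl
      · exact hXY (x + i) (y + i) hmxi hmyi
      · exact hXY (x + i) (y + j) hmxi hmyj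
    · rcases hz with h | h | h <;> rw [h]
      · exact hXY (x + j) y hmxj rfl
      · exact hXY (x + j) (y + i) hmxj hmyi
      · exact hXY (x + j) (y + j) hmxj hmyj
    · rcases hz with h | h <;> rw [h]
      · exact fun h => hi0 (by linear_combination -h)
      · exact fun h => hj0 (by linear_combination -h)
    · rw [hz]
      exact fun h => hij (by linear_combination h)
  · -- vertices
    intro z hz
    have key : ∀ w : R, Ideal.Quotient.mk I w ≠ 0 → ¬ IsUnit (Ideal.Quotient.mk I w) →
        CozVertex I w := by
      intro w h0 hu
      exact ⟨fun h => h0 (Ideal.Quotient.eq_zero_iff_mem.mpr h),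
        sup_ne_top_of_not_isUnit I w hu⟩
    simp only [List.mem_cons, List.not_mem_nil, or_false] at hz
    rcases hz with rfl | rfl | rfl | rfl | rfl | rfl
    · exact key z hx0 hxu
    · exact key _ (hmxi ▸ hx0) (hmxi ▸ hxu)
    · exact key _ (hmxj ▸ hx0) (hmxj ▸ hxu)
    · exact key z hy0 hyu
    · exact key _ (hmyi ▸ hy0) (hmyi ▸ hyu)
    · exact key _ (hmyj ▸ hy0) (hmyj ▸ hyu)
  · -- adjacency
    intro u hu v hv
    simp only [List.mem_cons, List.not_mem_nil, or_false] at hu hv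
    have hmu : Ideal.Quotient.mk I u = Ideal.Quotient.mk I x := by
      rcases hu with rfl | rfl | rfl <;> simp [hmi, hmj]
    have hmv : Ideal.Quotient.mk I v = Ideal.Quotient.mk I y := by
      rcases hv with rfl | rfl | rfl <;> simp [hmi, hmj]
    refine ⟨hXY u v hmu hmv, ?_, ?_⟩
    · rw [mem_sup_iff_dvd, hmu, hmv]
      exact fun h => hxy (Ideal.mem_span_singleton.mpr h)
    · rw [mem_sup_iff_dvd, hmu, hmv]
      exact fun h => hyx (Ideal.mem_span_singleton.mpr h)
end

section
/- Let R be a commutative ring with identity, J(R) its Jacobson radical, and I a nonzero ideal of R with I ⊆ J(R), such that the set of vertices of Γ''_I(R) lying outside J(R) has at least two elements. Then the induced subgraph of Γ''_I(R) on the vertices outside J(R) has no ends: every vertex x ∉ J(R) of Γ''_I(R) that is adjacent to some vertex y ∉ J(R) of Γ''_I(R) is adjacent to at least two distinct vertices of Γ''_I(R) lying outside J(R). -/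
/-- Let `I` be a nonzero ideal of `R` contained in the Jacobson radical
`J(R)`, such that `Γ''_I(R)` has at least two vertices outside `J(R)`. Then the induced
subgraph of `Γ''_I(R)` on the vertices outside `J(R)` has no ends: every vertex `x ∉ J(R)`
adjacent to some vertex `y ∉ J(R)` is adjacent to at least two distinct vertices outside
`J(R)`. -/
theorem stmt_13 {R : Type*} [CommRing R] (I : Ideal R)
    (hI0 : I ≠ ⊥) (hIJ : I ≤ (⊥ : Ideal R).jacobson)
    (htwo : ∃ a b : R, a ≠ b ∧ CozVertex I a ∧ a ∉ (⊥ : Ideal R).jacobson ∧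
      CozVertex I b ∧ b ∉ (⊥ : Ideal R).jacobson) :
    ∀ x : R, CozVertex I x → x ∉ (⊥ : Ideal R).jacobson →
      (∃ y : R, CozVertex I y ∧ y ∉ (⊥ : Ideal R).jacobson ∧ CozAdj I x y) →
      ∃ y z : R, y ≠ z ∧
        CozVertex I y ∧ y ∉ (⊥ : Ideal R).jacobson ∧ CozAdj I x y ∧
        CozVertex I z ∧ z ∉ (⊥ : Ideal R).jacobson ∧ CozAdj I x z := by
  rintro x hxV hxJ ⟨y, hyV, hyJ, hxney, hx_ny, hy_nx⟩
  obtain ⟨i, hiI, hi0⟩ := Submodule.exists_mem_ne_zero_of_ne_bot hI0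
  have hspan : Ideal.span {y + i} ⊔ I = Ideal.span {y} ⊔ I := by
    apply le_antisymm <;> refine sup_le ?_ le_sup_right <;>
      rw [Ideal.span_singleton_le_iff_mem]
    · exact add_mem (Ideal.mem_sup_left (Ideal.mem_span_singleton_self y))
        (Ideal.mem_sup_right hiI)
    · have h := sub_mem (Ideal.mem_sup_left (Ideal.mem_span_singleton_self (y + i)))
        (Ideal.mem_sup_right hiI : i ∈ Ideal.span {y + i} ⊔ I)
      simpa using h
  refine ⟨y, y + i, ?_, hyV, hyJ, ⟨hxney, hx_ny, hy_nx⟩, ⟨?_, ?_⟩, ?_, ?_, ?_, ?_⟩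
  · intro h
    exact hi0 (by linear_combination -h)
  · intro h
    exact hyV.1 (by simpa using I.sub_mem h hiI)
  · rw [hspan]; exact hyV.2
  · intro h
    exact hyJ (by simpa using Ideal.sub_mem _ h (hIJ hiI))
  · intro h
    apply hy_nx
    have : y = x - i := by linear_combination -h
    rw [this]
    exact sub_mem (Ideal.mem_sup_left (Ideal.mem_span_singleton_self x))
      (Ideal.mem_sup_right hiI)
  · rw [hspan]; exact hx_ny
  · intro h
    apply hy_nx
    have : y = (y + i) - i := by ring
    rw [this]
    exact sub_mem h (Ideal.mem_sup_right hiI)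
end

section
/- Let R₁ and R₂ be finite commutative local rings with identity and let I₁ ⊊ R₁, I₂ ⊊ R₂ be proper ideals. If the vertex set of Γ''_{I₁}(R₁) or the vertex set of Γ''_{I₂}(R₂) has more than one element, then Γ''_{I₁×I₂}(R₁ × R₂) contains the complete bipartite graph K^{3,3} as a subgraph, i.e., there exist six distinct vertices a₁, a₂, a₃, b₁, b₂, b₃ such that aᵢ is adjacent to bⱼ for all i, j ∈ {1,2,3}. -/
set_option linter.unusedSectionVars false

open IsLocalRing

lemma mem_pair_span_sup {R₁ R₂ : Type*} [CommRing R₁] [CommRing R₂]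
    {I₁ : Ideal R₁} {I₂ : Ideal R₂} {x u : R₁} {y v : R₂} :
    ((u, v) : R₁ × R₂) ∈ Ideal.span {(x, y)} ⊔ I₁.prod I₂ ↔
      u ∈ Ideal.span {x} ⊔ I₁ ∧ v ∈ Ideal.span {y} ⊔ I₂ := by
  constructor
  · intro hm
    rcases Submodule.mem_sup.mp hm with ⟨p, hp, q, hq, h⟩
    rcases Ideal.mem_span_singleton.mp hp with ⟨c, hc⟩
    rw [Ideal.mem_prod] at hq
    have h1 := congrArg Prod.fst h
    have h2 := congrArg Prod.snd h
    simp only [Prod.fst_add, Prod.snd_add] at h1 h2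
    constructor
    · exact Submodule.mem_sup.mpr ⟨p.1, Ideal.mem_span_singleton.mpr ⟨c.1, by rw [hc]; rfl⟩,
        q.1, hq.1, h1⟩
    · exact Submodule.mem_sup.mpr ⟨p.2, Ideal.mem_span_singleton.mpr ⟨c.2, by rw [hc]; rfl⟩,
        q.2, hq.2, h2⟩
  · rintro ⟨h1, h2⟩
    rcases Submodule.mem_sup.mp h1 with ⟨p1, hp1, q1, hq1, hh1⟩
    rcases Submodule.mem_sup.mp h2 with ⟨p2, hp2, q2, hq2, hh2⟩
    rcases Ideal.mem_span_singleton.mp hp1 with ⟨c1, hc1⟩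
    rcases Ideal.mem_span_singleton.mp hp2 with ⟨c2, hc2⟩
    refine Submodule.mem_sup.mpr ⟨(p1, p2),
      Ideal.mem_span_singleton.mpr ⟨(c1, c2), by rw [Prod.mk_mul_mk, ← hc1, ← hc2]⟩,
      (q1, q2), (Ideal.mem_prod _ _).mpr ⟨hq1, hq2⟩, by rw [Prod.mk_add_mk, hh1, hh2]⟩

lemma span_sup_le_max {R : Type*} [CommRing R] [IsLocalRing R] {I : Ideal R} (hI : I ≠ ⊤)
    {x : R} (hx : x ∈ maximalIdeal R) :
    Ideal.span {x} ⊔ I ≤ maximalIdeal R :=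
  sup_le ((Ideal.span_singleton_le_iff_mem _).mpr hx) (le_maximalIdeal hI)

lemma one_notMem_max {R : Type*} [CommRing R] [IsLocalRing R] : (1 : R) ∉ maximalIdeal R :=
  (Ideal.ne_top_iff_one _).mp (maximalIdeal.isMaximal R).ne_top

lemma unit_notMem {R : Type*} [CommRing R] [IsLocalRing R] {I : Ideal R} (hI : I ≠ ⊤)
    {x u : R} (hx : x ∈ maximalIdeal R) (hu : IsUnit u) : u ∉ Ideal.span {x} ⊔ I :=
  fun h => (mem_maximalIdeal u).mp (span_sup_le_max hI hx h) hu

lemma mem_max_of_sup_ne_top {R : Type*} [CommRing R] [IsLocalRing R] {I : Ideal R}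
    {x : R} (h : Ideal.span {x} ⊔ I ≠ ⊤) : x ∈ maximalIdeal R := by
  by_contra hx
  have hu : IsUnit x := by simpa [mem_maximalIdeal, mem_nonunits_iff] using hx
  exact h (by rw [Ideal.span_singleton_eq_top.mpr hu, top_sup_eq])

lemma one_add_mem_unit {R : Type*} [CommRing R] [IsLocalRing R] {x : R}
    (hx : x ∈ maximalIdeal R) : IsUnit (1 + x) := by
  by_contra h
  have h2 : 1 + x ∈ maximalIdeal R := (mem_maximalIdeal _).mpr h
  exact one_notMem_max (R := R) (by simpa using Ideal.sub_mem _ h2 hx)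

section
variable {R₁ R₂ : Type*} [CommRing R₁] [CommRing R₂] [IsLocalRing R₁] [IsLocalRing R₂]
  {I₁ : Ideal R₁} {I₂ : Ideal R₂}

-- orientation 1: vertices live in R₁

lemma vert1 (hI₁ : I₁ ≠ ⊤) (hI₂ : I₂ ≠ ⊤) {x : R₁} (hx : x ∈ maximalIdeal R₁) :
    CozVertex (I₁.prod I₂) (x, (1 : R₂)) := by
  constructor
  · rw [Ideal.mem_prod]
    rintro ⟨-, h2⟩
    exact (Ideal.ne_top_iff_one I₂).mp hI₂ h2
  · rw [Ne, Ideal.eq_top_iff_one]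
    intro h
    have h' : ((1, 1) : R₁ × R₂) ∈ _ := h
    exact unit_notMem hI₁ hx isUnit_one (mem_pair_span_sup.mp h').1

lemma vert2 (hI₁ : I₁ ≠ ⊤) (hI₂ : I₂ ≠ ⊤) {u : R₁} (hu : IsUnit u) :
    CozVertex (I₁.prod I₂) (u, (0 : R₂)) := by
  constructor
  · rw [Ideal.mem_prod]
    rintro ⟨h1, -⟩
    exact hI₁ (Ideal.eq_top_of_isUnit_mem _ h1 hu)
  · rw [Ne, Ideal.eq_top_iff_one]
    intro h
    have h' : ((1, 1) : R₁ × R₂) ∈ _ := h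
    have h2 := (mem_pair_span_sup.mp h').2
    rw [Ideal.span_singleton_eq_bot.mpr rfl, bot_sup_eq] at h2
    exact (Ideal.ne_top_iff_one I₂).mp hI₂ h2

lemma adj1 (hI₁ : I₁ ≠ ⊤) (hI₂ : I₂ ≠ ⊤) {x u : R₁} (hx : x ∈ maximalIdeal R₁)
    (hu : IsUnit u) : CozAdj (I₁.prod I₂) (x, (1 : R₂)) (u, (0 : R₂)) := by
  refine ⟨fun h => one_ne_zero (congrArg Prod.snd h), fun h => ?_, fun h => ?_⟩
  · have h2 := (mem_pair_span_sup.mp h).2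
    rw [Ideal.span_singleton_eq_bot.mpr rfl, bot_sup_eq] at h2
    exact (Ideal.ne_top_iff_one I₂).mp hI₂ h2
  · exact unit_notMem hI₁ hx hu (mem_pair_span_sup.mp h).1

-- orientation 2: vertices live in R₂

lemma vert1' (hI₁ : I₁ ≠ ⊤) (hI₂ : I₂ ≠ ⊤) {y : R₂} (hy : y ∈ maximalIdeal R₂) :
    CozVertex (I₁.prod I₂) ((1 : R₁), y) := by
  constructor
  · rw [Ideal.mem_prod]
    rintro ⟨h1, -⟩
    exact (Ideal.ne_top_iff_one I₁).mp hI₁ h1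
  · rw [Ne, Ideal.eq_top_iff_one]
    intro h
    have h' : ((1, 1) : R₁ × R₂) ∈ _ := h
    exact unit_notMem hI₂ hy isUnit_one (mem_pair_span_sup.mp h').2

lemma vert2' (hI₁ : I₁ ≠ ⊤) (hI₂ : I₂ ≠ ⊤) {u : R₂} (hu : IsUnit u) :
    CozVertex (I₁.prod I₂) ((0 : R₁), u) := by
  constructor
  · rw [Ideal.mem_prod]
    rintro ⟨-, h2⟩
    exact hI₂ (Ideal.eq_top_of_isUnit_mem _ h2 hu)
  · rw [Ne, Ideal.eq_top_iff_one]
    intro h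
    have h' : ((1, 1) : R₁ × R₂) ∈ _ := h
    have h1 := (mem_pair_span_sup.mp h').1
    rw [Ideal.span_singleton_eq_bot.mpr rfl, bot_sup_eq] at h1
    exact (Ideal.ne_top_iff_one I₁).mp hI₁ h1

lemma adj1' (hI₁ : I₁ ≠ ⊤) (hI₂ : I₂ ≠ ⊤) {y u : R₂} (hy : y ∈ maximalIdeal R₂)
    (hu : IsUnit u) : CozAdj (I₁.prod I₂) ((1 : R₁), y) ((0 : R₁), u) := by
  refine ⟨fun h => one_ne_zero (congrArg Prod.fst h), fun h => ?_, fun h => ?_⟩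
  · have h1 := (mem_pair_span_sup.mp h).1
    rw [Ideal.span_singleton_eq_bot.mpr rfl, bot_sup_eq] at h1
    exact (Ideal.ne_top_iff_one I₁).mp hI₁ h1
  · exact unit_notMem hI₂ hy hu (mem_pair_span_sup.mp h).2

end

/-- Let `R₁`, `R₂` be finite commutative local rings and `I₁ ⊊ R₁`,
`I₂ ⊊ R₂` proper ideals. If the vertex set of `Γ''_{I₁}(R₁)` or of `Γ''_{I₂}(R₂)` has more
than one element, then `Γ''_{I₁×I₂}(R₁ × R₂)` contains `K^{3,3}` as a subgraph. -/
theorem stmt_15 {R₁ R₂ : Type*} [CommRing R₁] [CommRing R₂]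
    [Finite R₁] [Finite R₂] [IsLocalRing R₁] [IsLocalRing R₂]
    (I₁ : Ideal R₁) (I₂ : Ideal R₂) (hI₁ : I₁ ≠ ⊤) (hI₂ : I₂ ≠ ⊤)
    (h : (∃ a b : R₁, a ≠ b ∧ CozVertex I₁ a ∧ CozVertex I₁ b) ∨
      (∃ a b : R₂, a ≠ b ∧ CozVertex I₂ a ∧ CozVertex I₂ b)) :
    ∃ a b : Fin 3 → R₁ × R₂,
      [a 0, a 1, a 2, b 0, b 1, b 2].Pairwise (· ≠ ·) ∧
      (∀ p, CozVertex (I₁.prod I₂) (a p) ∧ CozVertex (I₁.prod I₂) (b p)) ∧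
      (∀ p q, CozAdj (I₁.prod I₂) (a p) (b q)) := by
  rcases h with ⟨a, b, hab, ⟨haI, haT⟩, ⟨hbI, hbT⟩⟩ | ⟨a, b, hab, ⟨haI, haT⟩, ⟨hbI, hbT⟩⟩
  · have ham := mem_max_of_sup_ne_top haT
    have hbm := mem_max_of_sup_ne_top hbT
    have h0m : (0 : R₁) ∈ maximalIdeal R₁ := zero_mem _
    have ha0 : a ≠ 0 := fun h => haI (h ▸ I₁.zero_mem)
    have hb0 : b ≠ 0 := fun h => hbI (h ▸ I₁.zero_mem)
    have hxm : ∀ p : Fin 3, (![0, a, b] p) ∈ maximalIdeal R₁ := by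
      intro p; fin_cases p <;> simpa
    have hxu : ∀ p : Fin 3, IsUnit (![1, 1 + a, 1 + b] p) := by
      intro p
      fin_cases p
      · simpa using isUnit_one
      · simpa using one_add_mem_unit ham
      · simpa using one_add_mem_unit hbm
    refine ⟨fun p => (![0, a, b] p, 1), fun p => (![1, 1 + a, 1 + b] p, 0), ?_,
      fun p => ⟨vert1 hI₁ hI₂ (hxm p), vert2 hI₁ hI₂ (hxu p)⟩,
      fun p q => adj1 hI₁ hI₂ (hxm p) (hxu q)⟩
    have h10 : (1 : R₂) ≠ 0 := one_ne_zero
    simp [List.pairwise_cons, Prod.ext_iff, ha0, hb0, hab, h10, ha0.symm, hb0.symm]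
    have h1a : (1 : R₁) ≠ 1 + a := fun h => ha0 (left_eq_add.mp h)
    have h1b : (1 : R₁) ≠ 1 + b := fun h => hb0 (left_eq_add.mp h)
    have hab2 : (1 : R₁) + a ≠ 1 + b := fun h => hab (add_left_cancel h)
    refine ⟨?_, ?_, ?_, ?_⟩ <;>
      · rintro a1 b1 hmem h1 h2
        subst h1; subst h2
        casesm* _ ∨ _, _ ∧ _ <;>
          first
            | exact h10 ‹(1 : R₂) = 0›
            | exact ha0 (Eq.symm ‹(0 : R₁) = a›)
            | exact hb0 (Eq.symm ‹(0 : R₁) = b›)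
            | exact hab ‹a = b›
            | exact h1a ‹(1 : R₁) = 1 + a›
            | exact h1b ‹(1 : R₁) = 1 + b›
  · have ham := mem_max_of_sup_ne_top haT
    have hbm := mem_max_of_sup_ne_top hbT
    have h0m : (0 : R₂) ∈ maximalIdeal R₂ := zero_mem _
    have ha0 : a ≠ 0 := fun h => haI (h ▸ I₂.zero_mem)
    have hb0 : b ≠ 0 := fun h => hbI (h ▸ I₂.zero_mem)
    have hxm : ∀ p : Fin 3, (![0, a, b] p) ∈ maximalIdeal R₂ := by
      intro p; fin_cases p <;> simpa
    have hxu : ∀ p : Fin 3, IsUnit (![1, 1 + a, 1 + b] p) := by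
      intro p
      fin_cases p
      · simpa using isUnit_one
      · simpa using one_add_mem_unit ham
      · simpa using one_add_mem_unit hbm
    refine ⟨fun p => (1, ![0, a, b] p), fun p => (0, ![1, 1 + a, 1 + b] p), ?_,
      fun p => ⟨vert1' hI₁ hI₂ (hxm p), vert2' hI₁ hI₂ (hxu p)⟩,
      fun p q => adj1' hI₁ hI₂ (hxm p) (hxu q)⟩
    have h10 : (1 : R₁) ≠ 0 := one_ne_zero
    simp [List.pairwise_cons, Prod.ext_iff, ha0, hb0, hab, h10, ha0.symm, hb0.symm]
    have h1a : (1 : R₂) ≠ 1 + a := fun h => ha0 (left_eq_add.mp h)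
    have h1b : (1 : R₂) ≠ 1 + b := fun h => hb0 (left_eq_add.mp h)
    have hab2 : (1 : R₂) + a ≠ 1 + b := fun h => hab (add_left_cancel h)
    refine ⟨?_, ?_, ?_, ?_⟩ <;>
      · rintro a1 b1 hmem h1 h2
        subst h1; subst h2
        casesm* _ ∨ _, _ ∧ _ <;>
          first
            | exact h10 ‹(1 : R₁) = 0›
            | exact ha0 (Eq.symm ‹(0 : R₂) = a›)
            | exact hb0 (Eq.symm ‹(0 : R₂) = b›)
            | exact hab ‹a = b›
            | exact h1a ‹(1 : R₂) = 1 + a›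
            | exact h1b ‹(1 : R₂) = 1 + b›
end

section
/- Let (R, 𝔪) be a finite commutative local ring with identity and I a proper ideal of R. Suppose x₁, …, x₅ ∈ R are such that x₁ + I, …, x₅ + I are five distinct elements belonging to a minimal generating set of the ideal 𝔪/I of R/I. Then x₁, …, x₅ are five distinct pairwise adjacent vertices of Γ''_I(R); in particular, Γ''_I(R) contains the complete graph K^5 as a subgraph. -/
/-- Let `(R, 𝔪)` be a finite commutative local ring and `I` a proper ideal
of `R`. If `x 0 + I, …, x 4 + I` are five distinct elements belonging to a minimal generating
set `S` of the ideal `𝔪/I` of `R/I`, then `x 0, …, x 4` are five distinct pairwise adjacent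
vertices of `Γ''_I(R)`; in particular `Γ''_I(R)` contains `K^5` as a subgraph. -/
theorem stmt_16 {R : Type*} [CommRing R] [Finite R] [IsLocalRing R]
    (I : Ideal R) (hI : I ≠ ⊤) (x : Fin 5 → R) (S : Set (R ⧸ I))
    (hgen : Ideal.span S = Ideal.map (Ideal.Quotient.mk I) (IsLocalRing.maximalIdeal R))
    (hmin : ∀ T : Set (R ⧸ I), T ⊆ S →
      Ideal.span T = Ideal.map (Ideal.Quotient.mk I) (IsLocalRing.maximalIdeal R) → T = S)
    (hmem : ∀ k, Ideal.Quotient.mk I (x k) ∈ S)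
    (hdist : ∀ k l, k ≠ l → Ideal.Quotient.mk I (x k) ≠ Ideal.Quotient.mk I (x l)) :
    (∀ k, CozVertex I (x k)) ∧
      (∀ k l, k ≠ l → x k ≠ x l ∧ CozAdj I (x k) (x l)) := by
  have hIle : I ≤ IsLocalRing.maximalIdeal R := IsLocalRing.le_maximalIdeal hI
  -- key: mk (x k) is not in the span of the other elements of S
  have key : ∀ k, Ideal.Quotient.mk I (x k) ∉
      Ideal.span (S \ {Ideal.Quotient.mk I (x k)}) := by
    intro k hk
    have hsub : S \ {Ideal.Quotient.mk I (x k)} ⊆ S := Set.diff_subset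
    have hspan : Ideal.span (S \ {Ideal.Quotient.mk I (x k)}) = Ideal.span S := by
      apply le_antisymm (Ideal.span_mono hsub)
      rw [Ideal.span_le]
      intro s hs
      by_cases hse : s = Ideal.Quotient.mk I (x k)
      · subst hse; exact hk
      · exact Ideal.subset_span ⟨hs, hse⟩
    have heq := hmin _ hsub (hspan.trans hgen)
    have hx := hmem k
    rw [← heq] at hx
    exact hx.2 rfl
  -- x k ∈ maximal ideal
  have hxm : ∀ k, x k ∈ IsLocalRing.maximalIdeal R := by
    intro k
    have h1 : Ideal.Quotient.mk I (x k) ∈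
        Ideal.map (Ideal.Quotient.mk I) (IsLocalRing.maximalIdeal R) := by
      rw [← hgen]; exact Ideal.subset_span (hmem k)
    rw [Ideal.mem_map_iff_of_surjective _ Ideal.Quotient.mk_surjective] at h1
    obtain ⟨y, hy, hyx⟩ := h1
    have : x k - y ∈ I := by
      have := Ideal.Quotient.eq.mp hyx.symm
      exact this
    have : x k - y ∈ IsLocalRing.maximalIdeal R := hIle this
    simpa using add_mem this hy
  have hvert : ∀ k, CozVertex I (x k) := by
    intro k
    constructor
    · intro hxI
      apply key k
      have : Ideal.Quotient.mk I (x k) = 0 := Ideal.Quotient.eq_zero_iff_mem.mpr hxI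
      rw [this]; exact zero_mem _
    · intro htop
      have hle : Ideal.span {x k} ⊔ I ≤ IsLocalRing.maximalIdeal R := by
        apply sup_le _ hIle
        rw [Ideal.span_le, Set.singleton_subset_iff]
        exact hxm k
      rw [htop] at hle
      exact (IsLocalRing.maximalIdeal.isMaximal R).ne_top (top_le_iff.mp hle)
  refine ⟨hvert, fun k l hkl => ?_⟩
  have hne : x k ≠ x l := fun h => hdist k l hkl (by rw [h])
  have main : ∀ a b : Fin 5, a ≠ b → x a ∉ Ideal.span {x b} ⊔ I := by
    intro a b hab hmem'
    apply key a
    have h1 : Ideal.Quotient.mk I (x a) ∈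
        Ideal.map (Ideal.Quotient.mk I) (Ideal.span {x b} ⊔ I) :=
      Ideal.mem_map_of_mem _ hmem'
    have h2 : Ideal.map (Ideal.Quotient.mk I) (Ideal.span {x b} ⊔ I) =
        Ideal.span {Ideal.Quotient.mk I (x b)} := by
      rw [Ideal.map_sup, Ideal.map_quotient_self, sup_bot_eq, Ideal.map_span]
      simp
    rw [h2] at h1
    have hsub : ({Ideal.Quotient.mk I (x b)} : Set (R ⧸ I)) ⊆
        S \ {Ideal.Quotient.mk I (x a)} := by
      rw [Set.singleton_subset_iff]
      exact ⟨hmem b, fun h => hdist a b hab (by simpa using h.symm)⟩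
    exact Ideal.span_mono hsub h1
  exact ⟨hne, hne, main k l hkl, main l k (Ne.symm hkl)⟩
end

section
/- Let (R, 𝔪) be a finite commutative local ring with identity and I a proper ideal of R such that 𝔪/I is not a principal ideal of R/I. Suppose a minimal generating set of 𝔪/I contains two distinct elements x + I and y + I such that the sets U(R)x = {ux : u a unit of R} and U(R)y = {uy : u a unit of R} each have at least three elements. Then Γ''_I(R) contains the complete bipartite graph K^{3,3} as a subgraph: there exist units u₁, u₂, u₃, v₁, v₂, v₃ of R such that u₁x, u₂x, u₃x, v₁y, v₂y, v₃y are six distinct vertices of Γ''_I(R) and each uᵢx is adjacent to each vⱼy. -/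
lemma key_lemma {A : Type*} [CommRing A] {S : Set A} {J : Ideal A}
    (hgen : Ideal.span S = J)
    (hmin : ∀ T : Set A, T ⊆ S → Ideal.span T = J → T = S)
    {a b : A} (ha : a ∈ S) (hb : b ∈ S) (hab : a ≠ b) :
    a ∉ Ideal.span {b} := by
  intro h
  have hbT : b ∈ S \ {a} := ⟨hb, fun hba => hab (by simpa using hba.symm)⟩
  have hT : Ideal.span (S \ {a}) = J := by
    apply le_antisymm
    · rw [← hgen]; exact Ideal.span_mono Set.diff_subset
    · rw [← hgen, Ideal.span_le]
      intro s hs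
      by_cases hsa : s = a
      · subst hsa
        exact Ideal.span_mono (Set.singleton_subset_iff.2 hbT) h
      · exact Ideal.subset_span ⟨hs, hsa⟩
  have hSS := hmin _ Set.diff_subset hT
  rw [← hSS] at ha
  exact ha.2 rfl

lemma cross_lemma {R : Type*} [CommRing R] (I : Ideal R) {x y : R}
    (hxy : Ideal.Quotient.mk I x ∉ Ideal.span {Ideal.Quotient.mk I y})
    (u v : Rˣ) : (u : R) * x ∉ Ideal.span {(v : R) * y} ⊔ I := by
  intro h
  apply hxy
  have h1 : Ideal.Quotient.mk I ((u : R) * x) ∈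
      Ideal.map (Ideal.Quotient.mk I) (Ideal.span {(v : R) * y} ⊔ I) :=
    Ideal.mem_map_of_mem _ h
  rw [Ideal.map_sup, Ideal.map_span, Ideal.map_quotient_self, sup_bot_eq,
    Set.image_singleton, map_mul, map_mul,
    Ideal.span_singleton_mul_left_unit ((Ideal.Quotient.mk I).isUnit_map v.isUnit)] at h1
  rwa [Ideal.unit_mul_mem_iff_mem _ ((Ideal.Quotient.mk I).isUnit_map u.isUnit)] at h1



/-- Let `(R, 𝔪)` be a finite commutative local ring and `I` a proper ideal
of `R` such that `𝔪/I` is not a principal ideal of `R/I`. Suppose a minimal generating set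
`S` of `𝔪/I` contains distinct elements `x + I` and `y + I` such that `U(R)x` and `U(R)y`
each have at least three elements. Then `Γ''_I(R)` contains `K^{3,3}` as a subgraph: there
are units `u 0, u 1, u 2, v 0, v 1, v 2` such that the six elements
`u 0 * x, u 1 * x, u 2 * x, v 0 * y, v 1 * y, v 2 * y` are distinct vertices of `Γ''_I(R)`
and each `u p * x` is adjacent to each `v q * y`. -/
theorem stmt_17 {R : Type*} [CommRing R] [Finite R] [IsLocalRing R]
    (I : Ideal R) (hI : I ≠ ⊤)
    (hnp : ¬ (Ideal.map (Ideal.Quotient.mk I) (IsLocalRing.maximalIdeal R)).IsPrincipal)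
    (x y : R) (S : Set (R ⧸ I))
    (hgen : Ideal.span S = Ideal.map (Ideal.Quotient.mk I) (IsLocalRing.maximalIdeal R))
    (hmin : ∀ T : Set (R ⧸ I), T ⊆ S →
      Ideal.span T = Ideal.map (Ideal.Quotient.mk I) (IsLocalRing.maximalIdeal R) → T = S)
    (hxS : Ideal.Quotient.mk I x ∈ S) (hyS : Ideal.Quotient.mk I y ∈ S)
    (hne : Ideal.Quotient.mk I x ≠ Ideal.Quotient.mk I y)
    (hUx : ∃ u₁ u₂ u₃ : Rˣ, (u₁ : R) * x ≠ (u₂ : R) * x ∧ (u₁ : R) * x ≠ (u₃ : R) * x ∧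
      (u₂ : R) * x ≠ (u₃ : R) * x)
    (hUy : ∃ v₁ v₂ v₃ : Rˣ, (v₁ : R) * y ≠ (v₂ : R) * y ∧ (v₁ : R) * y ≠ (v₃ : R) * y ∧
      (v₂ : R) * y ≠ (v₃ : R) * y) :
    ∃ u v : Fin 3 → Rˣ,
      [(u 0 : R) * x, (u 1 : R) * x, (u 2 : R) * x,
        (v 0 : R) * y, (v 1 : R) * y, (v 2 : R) * y].Pairwise (· ≠ ·) ∧
      (∀ p, CozVertex I ((u p : R) * x) ∧ CozVertex I ((v p : R) * y)) ∧
      (∀ p q, CozAdj I ((u p : R) * x) ((v q : R) * y)) := by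
  obtain ⟨u₁, u₂, u₃, hu12, hu13, hu23⟩ := hUx
  obtain ⟨v₁, v₂, v₃, hv12, hv13, hv23⟩ := hUy
  have hxy : Ideal.Quotient.mk I x ∉ Ideal.span {Ideal.Quotient.mk I y} :=
    key_lemma hgen hmin hxS hyS hne
  have hyx : Ideal.Quotient.mk I y ∉ Ideal.span {Ideal.Quotient.mk I x} :=
    key_lemma hgen hmin hyS hxS hne.symm
  -- elements of the maximal ideal
  have hmem : ∀ z : R, Ideal.Quotient.mk I z ∈ S → z ∈ IsLocalRing.maximalIdeal R := by
    intro z hz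
    have h1 : Ideal.Quotient.mk I z ∈
        Ideal.map (Ideal.Quotient.mk I) (IsLocalRing.maximalIdeal R) := by
      rw [← hgen]; exact Ideal.subset_span hz
    have h2 : z ∈ Ideal.comap (Ideal.Quotient.mk I)
        (Ideal.map (Ideal.Quotient.mk I) (IsLocalRing.maximalIdeal R)) := h1
    rw [Ideal.comap_map_of_surjective _ Ideal.Quotient.mk_surjective,
      ← RingHom.ker_eq_comap_bot, Ideal.mk_ker,
      sup_eq_left.2 (IsLocalRing.le_maximalIdeal hI)] at h2
    exact h2
  have hxm := hmem x hxS
  have hym := hmem y hyS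
  -- vertex property
  have hvert : ∀ (w : Rˣ) (z : R),
      Ideal.Quotient.mk I z ∉ Ideal.span {Ideal.Quotient.mk I z} → False := by
    intro _ _ h; exact h (Ideal.mem_span_singleton_self _)
  have vertex : ∀ (w : Rˣ) (z : R), z ∈ IsLocalRing.maximalIdeal R →
      Ideal.Quotient.mk I z ≠ 0 → CozVertex I ((w : R) * z) := by
    intro w z hzm hz0
    constructor
    · intro h
      apply hz0
      have : Ideal.Quotient.mk I ((w : R) * z) = 0 := (Ideal.Quotient.eq_zero_iff_mem).2 h
      rw [map_mul] at this
      exact ((IsUnit.mul_right_eq_zero ((Ideal.Quotient.mk I).isUnit_map w.isUnit)).1 this)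
    · intro h
      apply (IsLocalRing.maximalIdeal.isMaximal R).ne_top
      rw [eq_top_iff, ← h]
      exact sup_le (Ideal.span_le.2 (Set.singleton_subset_iff.2
        (Ideal.mul_mem_left _ _ hzm))) (IsLocalRing.le_maximalIdeal hI)
  have hx0 : Ideal.Quotient.mk I x ≠ 0 := fun h => hxy (h ▸ Ideal.zero_mem _)
  have hy0 : Ideal.Quotient.mk I y ≠ 0 := fun h => hyx (h ▸ Ideal.zero_mem _)
  -- cross non-membership
  have hcx : ∀ u v : Rˣ, (u : R) * x ∉ Ideal.span {(v : R) * y} ⊔ I :=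
    fun u v => cross_lemma I hxy u v
  have hcy : ∀ v u : Rˣ, (v : R) * y ∉ Ideal.span {(u : R) * x} ⊔ I :=
    fun v u => cross_lemma I hyx v u
  have hcne : ∀ u v : Rˣ, (u : R) * x ≠ (v : R) * y := by
    intro u v h
    exact hcx u v (h ▸ Ideal.mem_sup_left (Ideal.mem_span_singleton_self _))
  refine ⟨![u₁, u₂, u₃], ![v₁, v₂, v₃], ?_, ?_, ?_⟩
  · simp [List.pairwise_cons, hu12, hu13, hu23, hv12, hv13, hv23, hcne,
      Matrix.cons_val_zero, Matrix.cons_val_one, Matrix.cons_val_two,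
      Matrix.head_cons, Matrix.tail_cons]
  · intro p
    exact ⟨vertex _ x hxm hx0, vertex _ y hym hy0⟩
  · intro p q
    exact ⟨hcne _ _, hcx _ _, hcy _ _⟩
end

section
/- Let R₁, R₂ be commutative rings with identity and I₁, I₂ ideals of R₁, R₂ respectively. If Γ''_{I₁}(R₁) contains the complete bipartite graph K^{3,3} as a subgraph (respectively, the complete graph K^5 as a subgraph), then Γ''_{I₁×I₂}(R₁ × R₂) contains K^{3,3} (respectively, K^5) as a subgraph; indeed, for any fixed y ∈ R₂, the map x ↦ (x, y) sends distinct adjacent vertices of Γ''_{I₁}(R₁) to distinct adjacent vertices of Γ''_{I₁×I₂}(R₁ × R₂). -/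

private lemma key_mem {R₁ R₂ : Type*} [CommRing R₁] [CommRing R₂]
    (I₁ : Ideal R₁) (I₂ : Ideal R₂) {a x : R₁} {b y : R₂}
    (h : (a, b) ∈ Ideal.span {(x, y)} ⊔ I₁.prod I₂) :
    a ∈ Ideal.span {x} ⊔ I₁ := by
  rw [Submodule.mem_sup] at h ⊢
  obtain ⟨s, hs, t, ht, hst⟩ := h
  rw [Ideal.mem_span_singleton] at hs
  obtain ⟨r, hr⟩ := hs
  refine ⟨s.1, ?_, t.1, ht.1, ?_⟩
  · rw [Ideal.mem_span_singleton]
    exact ⟨r.1, by rw [hr]; rfl⟩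
  · exact congrArg Prod.fst hst

private lemma vertex_lift {R₁ R₂ : Type*} [CommRing R₁] [CommRing R₂]
    (I₁ : Ideal R₁) (I₂ : Ideal R₂) {x : R₁} (y : R₂)
    (h : CozVertex I₁ x) : CozVertex (I₁.prod I₂) (x, y) := by
  obtain ⟨h1, h2⟩ := h
  refine ⟨fun hm => h1 hm.1, fun ht => h2 ?_⟩
  rw [Ideal.eq_top_iff_one] at ht ⊢
  exact key_mem I₁ I₂ (b := (1 : R₂)) (y := y) ht

private lemma adj_lift {R₁ R₂ : Type*} [CommRing R₁] [CommRing R₂]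
    (I₁ : Ideal R₁) (I₂ : Ideal R₂) {x₁ x₂ : R₁} (y : R₂)
    (h : CozAdj I₁ x₁ x₂) : CozAdj (I₁.prod I₂) (x₁, y) (x₂, y) := by
  obtain ⟨h1, h2, h3⟩ := h
  exact ⟨fun he => h1 (congrArg Prod.fst he),
    fun hm => h2 (key_mem I₁ I₂ hm),
    fun hm => h3 (key_mem I₁ I₂ hm)⟩

/-- If `Γ''_{I₁}(R₁)` contains `K^{3,3}` (resp. `K^5`) as a subgraph, then
so does `Γ''_{I₁×I₂}(R₁ × R₂)`; indeed, for any fixed `y ∈ R₂` the map `x ↦ (x, y)` sends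
distinct adjacent vertices of `Γ''_{I₁}(R₁)` to distinct adjacent vertices of
`Γ''_{I₁×I₂}(R₁ × R₂)`. -/
theorem stmt_18 {R₁ R₂ : Type*} [CommRing R₁] [CommRing R₂]
    (I₁ : Ideal R₁) (I₂ : Ideal R₂) :
    ((∃ a b : Fin 3 → R₁,
        [a 0, a 1, a 2, b 0, b 1, b 2].Pairwise (· ≠ ·) ∧
        (∀ p, CozVertex I₁ (a p) ∧ CozVertex I₁ (b p)) ∧
        (∀ p q, CozAdj I₁ (a p) (b q))) →
      ∃ a b : Fin 3 → R₁ × R₂,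
        [a 0, a 1, a 2, b 0, b 1, b 2].Pairwise (· ≠ ·) ∧
        (∀ p, CozVertex (I₁.prod I₂) (a p) ∧ CozVertex (I₁.prod I₂) (b p)) ∧
        (∀ p q, CozAdj (I₁.prod I₂) (a p) (b q))) ∧
    ((∃ a : Fin 5 → R₁,
        [a 0, a 1, a 2, a 3, a 4].Pairwise (· ≠ ·) ∧
        (∀ p, CozVertex I₁ (a p)) ∧
        (∀ p q, p ≠ q → CozAdj I₁ (a p) (a q))) →
      ∃ a : Fin 5 → R₁ × R₂,
        [a 0, a 1, a 2, a 3, a 4].Pairwise (· ≠ ·) ∧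
        (∀ p, CozVertex (I₁.prod I₂) (a p)) ∧
        (∀ p q, p ≠ q → CozAdj (I₁.prod I₂) (a p) (a q))) ∧
    (∀ y : R₂, ∀ x₁ x₂ : R₁, x₁ ≠ x₂ →
      CozVertex I₁ x₁ → CozVertex I₁ x₂ → CozAdj I₁ x₁ x₂ →
      ((x₁, y) : R₁ × R₂) ≠ (x₂, y) ∧
        CozVertex (I₁.prod I₂) (x₁, y) ∧ CozVertex (I₁.prod I₂) (x₂, y) ∧
        CozAdj (I₁.prod I₂) (x₁, y) (x₂, y)) := by
  
  refine ⟨?_, ?_, ?_⟩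
  · rintro ⟨a, b, hpw, hv, hadj⟩
    refine ⟨fun p => (a p, 0), fun p => (b p, 0), ?_, ?_, ?_⟩
    · have h2 := List.Pairwise.map (S := (· ≠ ·)) (fun x : R₁ => (x, (0 : R₂)))
        (fun u v (h : u ≠ v) (he : (u, (0 : R₂)) = (v, 0)) => h (congrArg Prod.fst he)) hpw
      simpa using h2
    · exact fun p => ⟨vertex_lift I₁ I₂ 0 (hv p).1, vertex_lift I₁ I₂ 0 (hv p).2⟩
    · exact fun p q => adj_lift I₁ I₂ 0 (hadj p q)
  · rintro ⟨a, hpw, hv, hadj⟩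
    refine ⟨fun p => (a p, 0), ?_, fun p => vertex_lift I₁ I₂ 0 (hv p),
      fun p q hpq => adj_lift I₁ I₂ 0 (hadj p q hpq)⟩
    have h2 := List.Pairwise.map (S := (· ≠ ·)) (fun x : R₁ => (x, (0 : R₂)))
      (fun u v (h : u ≠ v) (he : (u, (0 : R₂)) = (v, 0)) => h (congrArg Prod.fst he)) hpw
    simpa using h2
  · intro y x₁ x₂ hne hv₁ hv₂ hadj
    exact ⟨fun he => hne (congrArg Prod.fst he), vertex_lift I₁ I₂ y hv₁,
      vertex_lift I₁ I₂ y hv₂, adj_lift I₁ I₂ y hadj⟩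
end
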